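/- arXiv:1412.4763 — 10 statements merged into one kernel-verified Lean document; each statement's English description precedes it below -/
import Mathlib

section
/- Let n, m be natural numbers, z ∈ ℂ, and let E, F be m×m complex matrices, G an m×n complex matrix, and T an n×m complex matrix such that E·F = z·I_m. Then z^n · det(E − G·T) = det(E) · det(z·I_n − T·F·G). -/
/-!
If `det E` is a unit then `F = z • E⁻¹`, so `z • 1 - T * F * G = z • (1 - T * E⁻¹ * G)` and the
identity is the Weinstein–Aronszajn identity `det (1 - E⁻¹ * G * T) = det (1 - T * E⁻¹ * G)`.
If `det E = 0` then `z ^ m = det E * det F = 0`, so `z = 0` and both sides vanish.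
-/

open Matrix

namespace Matrix

variable {m n R : Type*} [Fintype m] [DecidableEq m] [Fintype n]

theorem eq_smul_inv_of_mul_eq_smul_one [CommRing R] {E F : Matrix m m R} {z : R}
    (hEF : E * F = z • 1) (hE : IsUnit E.det) : F = z • E⁻¹ := by
  rw [← nonsing_inv_mul_cancel_left E F hE, hEF, Matrix.mul_smul, Matrix.mul_one]

theorem pow_card_mul_det_sub_mul_of_isUnit [DecidableEq n] [CommRing R] {E F : Matrix m m R}
    {z : R} (G : Matrix m n R) (T : Matrix n m R) (hEF : E * F = z • 1) (hE : IsUnit E.det) :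
    z ^ Fintype.card n * (E - G * T).det = E.det * (z • 1 - T * F * G).det := by
  have hsmul : z • (1 : Matrix n n R) - T * F * G = z • (1 - T * E⁻¹ * G) := by
    rw [eq_smul_inv_of_mul_eq_smul_one hEF hE, Matrix.mul_smul, Matrix.smul_mul, smul_sub]
  rw [hsmul, det_smul, sub_eq_add_neg E, ← Matrix.neg_mul, det_add_mul _ _ hE,
    Matrix.mul_neg, ← sub_eq_add_neg]
  ring

theorem eq_zero_of_mul_eq_smul_one_of_det_eq_zero [CommRing R] [IsReduced R]
    {E F : Matrix m m R} {z : R} (hEF : E * F = z • 1) (hE : E.det = 0) : z = 0 := by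
  have hpow : z ^ Fintype.card m = 0 := by
    simpa [det_mul, det_smul, hE] using (congrArg det hEF).symm
  exact eq_zero_of_pow_eq_zero hpow

theorem pow_card_mul_det_sub_mul_of_det_eq_zero [CommRing R] [IsReduced R]
    {E F : Matrix m m R} {z : R} (G : Matrix m n R) (T : Matrix n m R)
    (hEF : E * F = z • 1) (hE : E.det = 0) :
    z ^ Fintype.card n * (E - G * T).det = 0 := by
  rw [eq_zero_of_mul_eq_smul_one_of_det_eq_zero hEF hE]
  cases isEmpty_or_nonempty n
  · rw [Subsingleton.elim G 0, Matrix.zero_mul, sub_zero, hE, mul_zero]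
  · rw [zero_pow Fintype.card_ne_zero, zero_mul]

theorem pow_card_mul_det_sub_mul [DecidableEq n] [Field R] {E F : Matrix m m R} {z : R}
    (G : Matrix m n R) (T : Matrix n m R) (hEF : E * F = z • 1) :
    z ^ Fintype.card n * (E - G * T).det = E.det * (z • 1 - T * F * G).det := by
  by_cases hE : E.det = 0
  · rw [pow_card_mul_det_sub_mul_of_det_eq_zero G T hEF hE, hE, zero_mul]
  · exact pow_card_mul_det_sub_mul_of_isUnit G T hEF (isUnit_iff_ne_zero.mpr hE)

end Matrix

/-- If `E * F = z • I_m`, then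
`z^n * det(E − G·T) = det(E) * det(z·I_n − T·F·G)`. -/
theorem stmt_0 (n m : ℕ) (z : ℂ) (E F : Matrix (Fin m) (Fin m) ℂ)
    (G : Matrix (Fin m) (Fin n) ℂ) (T : Matrix (Fin n) (Fin m) ℂ)
    (hEF : E * F = z • (1 : Matrix (Fin m) (Fin m) ℂ)) :
    z ^ n * (E - G * T).det =
      E.det * (z • (1 : Matrix (Fin n) (Fin n) ℂ) - T * F * G).det := by
  simpa only [Fintype.card_fin] using pow_card_mul_det_sub_mul G T hEF
end

section
/- Assume W has reciprocal weights. For all t↑↓, t↓↑, u↑, u↓ ∈ ℂ, setting s↑ = u↑·(t↑↓ − 1) and s↓ = u↓·(t↓↑ − 1), one has (1 − s↑·s↓)^n · det(I_{2m} − M(1,1,t↑↓,t↓↑,u↑,u↓)) = (1 − s↑·s↓)^m · det((1 − s↑·s↓)·I_n − u↑·W − u↓·W* − s↑·u↓·D^out − s↓·u↑·D^in). -/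
open Matrix

noncomputable section
open scoped Classical

namespace ZetaStmt1

variable {V : Type*} [Fintype V] [DecidableEq V]

/-- The edge set of the weighted digraph: pairs of vertices with nonzero weight. -/
abbrev Edge (W : Matrix V V ℂ) : Type _ := {p : V × V // W p.1 p.2 ≠ 0}

/-- The bidirectional edge set `E⇅ = E ⊕ E`. -/
abbrev BiEdge (W : Matrix V V ℂ) : Type _ := Edge W ⊕ Edge W

variable (W : Matrix V V ℂ)

/-- Tail of a bidirectional edge. -/
def tail : BiEdge W → V := Sum.elim (fun e => e.1.1) (fun e => e.1.2)

/-- Head of a bidirectional edge. -/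
def head : BiEdge W → V := Sum.elim (fun e => e.1.2) (fun e => e.1.1)

/-- Weight of a bidirectional edge (the added reverse copies have reciprocal weight). -/
def wt : BiEdge W → ℂ := Sum.elim (fun e => W e.1.1 e.1.2) (fun e => (W e.1.1 e.1.2)⁻¹)

/-- Direction of a bidirectional edge: `true` = ↑ (original), `false` = ↓ (added). -/
def dir : BiEdge W → Bool := Sum.elim (fun _ => true) (fun _ => false)

/-- The weighted bump matrix `B_{dd'}`. -/
def B (d d' : Bool) : Matrix (BiEdge W) (BiEdge W) ℂ :=
  Matrix.of fun e f =>
    if dir W e = d ∧ dir W f = d' ∧ tail W f = head W e ∧ head W f = tail W e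
    then wt W e else 0

/-- The weighted adjacency matrix `C_d` of the line digraph. -/
def C (d : Bool) : Matrix (BiEdge W) (BiEdge W) ℂ :=
  Matrix.of fun e f => if dir W e = d ∧ head W e = tail W f then wt W e else 0

/-- The matrix `M(t,u)`; the argument order is `(t↑↑, t↓↓, t↑↓, t↓↑, u↑, u↓)`. -/
def M (t₁ t₂ t₃ t₄ u₁ u₂ : ℂ) : Matrix (BiEdge W) (BiEdge W) ℂ :=
  u₁ • (C W true + (t₁ - 1) • B W true true + (t₃ - 1) • B W true false) +
  u₂ • (C W false + (t₂ - 1) • B W false false + (t₄ - 1) • B W false true)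

/-- The 0/1 adjacency matrix of the support of `W`. -/
def Adj : Matrix V V ℂ := Matrix.of fun u v => if W u v ≠ 0 then 1 else 0

/-- Diagonal matrix of out-degrees (row sums of `Adj`). -/
def Dout : Matrix V V ℂ := Matrix.diagonal fun u => ∑ v, Adj W u v

/-- Diagonal matrix of in-degrees (column sums of `Adj`). -/
def Din : Matrix V V ℂ := Matrix.diagonal fun v => ∑ u, Adj W u v

/-- `(W*)_{uv} = (W_{vu})⁻¹` if `W_{vu} ≠ 0` and `0` otherwise (note `0⁻¹ = 0` in `ℂ`). -/
def Wstar : Matrix V V ℂ := Matrix.of fun u v => if W v u ≠ 0 then (W v u)⁻¹ else 0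

/-- `W` has reciprocal weights. -/
def Reciprocal : Prop := ∀ u v, W u v ≠ 0 → W v u ≠ 0 → W u v * W v u = 1

end ZetaStmt1

/-!
At `t↑↑ = t↓↓ = 1` the bumps `B↑↑`, `B↓↓` drop out and `M = K L + J`, where `L` is the tail
incidence matrix of `E⇅`, `K` the head incidence matrix weighted by `u_{dir e} w(e)`, and
`J = s↑ B↑↓ + s↓ B↓↑` swaps each edge with its reversed copy. Since `w(e↑) w(e↓) = 1`, we get
`J² = s↑ s↓` and `det (1 + J) = c^m` with `c = 1 - s↑ s↓`, so `(1 - M)(1 + J) = c - K L (1 + J)`.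
Evaluating `X^n χ(AB) = X^{2m} χ(BA)` at `X = c` moves the determinant to `V`, where
`L (1 + J) K = u↑ W + u↓ W* + s↑ u↓ D^out + s↓ u↑ D^in`. Cancelling `c^m` is harmless when
`c = 0` and `m > 0`: then `n > 0` and both sides vanish.
-/

section Incidence

variable {R E F V : Type*}

variable (R) in
def incidenceMatrix [Zero R] [One R] (f : E → V) : Matrix V E R :=
  of fun v e => if f e = v then 1 else 0

variable [NonAssocSemiring R]

theorem transpose_incidenceMatrix_mul_incidenceMatrix [Fintype V] (f : E → V) (g : F → V) :
    (incidenceMatrix R f)ᵀ * incidenceMatrix R g = of fun a b => if f a = g b then 1 else 0 := by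
  ext a b
  simp [incidenceMatrix, mul_apply, eq_comm]

theorem incidenceMatrix_mul_transpose [Fintype E] [DecidableEq V] (f : E → V) :
    incidenceMatrix R f * (incidenceMatrix R f)ᵀ =
      diagonal fun v => ∑ e, if f e = v then 1 else 0 := by
  ext u v
  simp only [incidenceMatrix, mul_apply, transpose_apply, of_apply, diagonal_apply, mul_ite,
    mul_one, mul_zero]
  split_ifs with huv
  · subst huv
    exact Finset.sum_congr rfl fun e _ => by split_ifs <;> rfl
  · exact Finset.sum_eq_zero fun e _ => by grind

end Incidence

theorem det_one_sub_mul_add_mul_det_one_add {R E V : Type*} [CommRing R]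
    [Fintype E] [DecidableEq E] [Fintype V] [DecidableEq V]
    (K : Matrix E V R) (L : Matrix V E R) (J : Matrix E E R) (c : R)
    (hJ : J * J = (1 - c) • 1) :
    c ^ Fintype.card V * (det (1 - (K * L + J)) * det (1 + J)) =
      c ^ Fintype.card E * det (c • 1 - L * (1 + J) * K) := by
  have hfactor : (1 - (K * L + J)) * (1 + J) = c • 1 - K * (L * (1 + J)) := by
    have : (1 - (K * L + J)) * (1 + J) = 1 - J * J - K * (L * (1 + J)) := by
      simp only [Matrix.sub_mul, Matrix.add_mul, Matrix.mul_add, Matrix.one_mul, Matrix.mul_one,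
        Matrix.mul_assoc]
      abel
    rw [this, hJ, sub_smul, one_smul, sub_sub_cancel]
  have hcomm := congrArg (Polynomial.eval c) (charpoly_mul_comm' K (L * (1 + J)))
  simp only [Polynomial.eval_mul, Polynomial.eval_pow, Polynomial.eval_X, eval_charpoly,
    scalar_apply, ← smul_one_eq_diagonal] at hcomm
  rwa [← det_mul, hfactor]

namespace ZetaStmt1

section

variable {V : Type*} [Fintype V] (W : Matrix V V ℂ)

theorem sum_edge_eq_sum_adj (g : V × V → ℂ) :
    ∑ a : Edge W, g a.1 = ∑ x, ∑ y, Adj W x y * g (x, y) := by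
  rw [← Finset.sum_subtype {p | W p.1 p.2 ≠ 0} (fun p => by simp) g, Finset.sum_filter,
    Fintype.sum_prod_type]
  simp [Adj]

end

variable {V : Type*} [DecidableEq V] (W : Matrix V V ℂ)

def tailInc : Matrix V (Edge W) ℂ := incidenceMatrix ℂ fun a => a.1.1

def headInc : Matrix V (Edge W) ℂ := incidenceMatrix ℂ fun a => a.1.2

def weightDiag : Matrix (Edge W) (Edge W) ℂ := diagonal fun a => W a.1.1 a.1.2

def invWeightDiag : Matrix (Edge W) (Edge W) ℂ := diagonal fun a => (W a.1.1 a.1.2)⁻¹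

theorem B_true_false_eq : B W true false = fromBlocks 0 (weightDiag W) 0 0 := by
  ext (a | a) (b | b) <;> simp [B, dir, head, tail, wt, weightDiag, diagonal_apply]
  grind [Subtype.ext_iff, Prod.ext_iff]

theorem B_false_true_eq : B W false true = fromBlocks 0 0 (invWeightDiag W) 0 := by
  ext (a | a) (b | b) <;> simp [B, dir, head, tail, wt, invWeightDiag, diagonal_apply]
  split_ifs <;> simp_all [Subtype.ext_iff, Prod.ext_iff]

variable [Fintype V]

theorem weightDiag_mul_invWeightDiag : weightDiag W * invWeightDiag W = 1 := by
  rw [weightDiag, invWeightDiag, diagonal_mul_diagonal, ← diagonal_one]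
  exact congrArg diagonal (funext fun a => mul_inv_cancel₀ a.2)

theorem invWeightDiag_mul_weightDiag : invWeightDiag W * weightDiag W = 1 := by
  rw [weightDiag, invWeightDiag, diagonal_mul_diagonal, ← diagonal_one]
  exact congrArg diagonal (funext fun a => inv_mul_cancel₀ a.2)

theorem tailInc_mul_diagonal_mul_headInc_transpose (g : V × V → ℂ) :
    tailInc W * (diagonal fun a => g a.1 : Matrix (Edge W) (Edge W) ℂ) * (headInc W)ᵀ =
      of fun u v => Adj W u v * g (u, v) := by
  ext u v
  rw [mul_apply]
  simp only [mul_diagonal, tailInc, headInc, incidenceMatrix, of_apply, transpose_apply,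
    ite_mul, one_mul, zero_mul, mul_ite, mul_one, mul_zero]
  rw [sum_edge_eq_sum_adj W fun p => if p.2 = v then (if p.1 = u then g p else 0) else 0]
  simp

theorem tailInc_mul_weightDiag_mul_headInc_transpose :
    tailInc W * weightDiag W * (headInc W)ᵀ = W := by
  rw [weightDiag, tailInc_mul_diagonal_mul_headInc_transpose W fun p => W p.1 p.2]
  ext u v
  by_cases h : W u v = 0 <;> simp [Adj, h]

theorem headInc_mul_invWeightDiag_mul_tailInc_transpose :
    headInc W * invWeightDiag W * (tailInc W)ᵀ = Wstar W := by
  have h := congrArg transpose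
    (tailInc_mul_diagonal_mul_headInc_transpose W fun p => (W p.1 p.2)⁻¹)
  rw [transpose_mul, transpose_mul, diagonal_transpose, transpose_transpose,
    ← Matrix.mul_assoc] at h
  rw [invWeightDiag, h]
  ext u v
  simp [Adj, Wstar]

theorem tailInc_mul_transpose : tailInc W * (tailInc W)ᵀ = Dout W := by
  rw [tailInc, incidenceMatrix_mul_transpose, Dout]
  congr 1
  funext u
  rw [sum_edge_eq_sum_adj W fun p => if p.1 = u then 1 else 0]
  simp

theorem headInc_mul_transpose : headInc W * (headInc W)ᵀ = Din W := by
  rw [headInc, incidenceMatrix_mul_transpose, Din]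
  congr 1
  funext v
  rw [sum_edge_eq_sum_adj W fun p => if p.2 = v then 1 else 0]
  simp

theorem C_true_eq : C W true = fromBlocks (weightDiag W * (headInc W)ᵀ * tailInc W)
    (weightDiag W * (headInc W)ᵀ * headInc W) 0 0 := by
  ext (a | a) (b | b) <;>
    simp [C, dir, head, tail, wt, weightDiag, headInc, tailInc, Matrix.mul_assoc,
      transpose_incidenceMatrix_mul_incidenceMatrix]

theorem C_false_eq : C W false = fromBlocks 0 0 (invWeightDiag W * (tailInc W)ᵀ * tailInc W)
    (invWeightDiag W * (tailInc W)ᵀ * headInc W) := by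
  ext (a | a) (b | b) <;>
    simp [C, dir, head, tail, wt, invWeightDiag, headInc, tailInc, Matrix.mul_assoc,
      transpose_incidenceMatrix_mul_incidenceMatrix]

/-- The entry at `(e, v)` is `u_{dir e} · w(e) · [head e = v]`. -/
def headMat (u₁ u₂ : ℂ) : Matrix (BiEdge W) V ℂ :=
  fromRows (u₁ • weightDiag W * (headInc W)ᵀ) (u₂ • invWeightDiag W * (tailInc W)ᵀ)

def tailMat : Matrix V (BiEdge W) ℂ := fromCols (tailInc W) (headInc W)

def bumpMat (s₁ s₂ : ℂ) : Matrix (BiEdge W) (BiEdge W) ℂ :=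
  fromBlocks 0 (s₁ • weightDiag W) (s₂ • invWeightDiag W) 0

theorem M_one_one_eq (t₃ t₄ u₁ u₂ : ℂ) :
    M W 1 1 t₃ t₄ u₁ u₂ =
      headMat W u₁ u₂ * tailMat W + bumpMat W (u₁ * (t₃ - 1)) (u₂ * (t₄ - 1)) := by
  rw [M, C_true_eq, C_false_eq, B_true_false_eq, B_false_true_eq, headMat, tailMat, bumpMat,
    fromRows_mul_fromCols]
  simp only [sub_self, zero_smul, add_zero, fromBlocks_smul, fromBlocks_add, smul_zero, zero_add,
    Matrix.smul_mul, Matrix.mul_assoc, smul_add, smul_smul]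

theorem bumpMat_mul_self (s₁ s₂ : ℂ) : bumpMat W s₁ s₂ * bumpMat W s₁ s₂ = (s₁ * s₂) • 1 := by
  rw [bumpMat, fromBlocks_multiply, ← fromBlocks_one, fromBlocks_smul]
  simp only [Matrix.smul_mul, Matrix.mul_smul, smul_smul, weightDiag_mul_invWeightDiag,
    invWeightDiag_mul_weightDiag, mul_comm, smul_zero, Matrix.mul_zero, Matrix.zero_mul,
    add_zero, zero_add]

theorem det_one_add_bumpMat (s₁ s₂ : ℂ) :
    det (1 + bumpMat W s₁ s₂) = (1 - s₁ * s₂) ^ Fintype.card (Edge W) := by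
  rw [bumpMat, ← fromBlocks_one, fromBlocks_add]
  simp only [add_zero, zero_add]
  rw [det_fromBlocks_one₁₁, Matrix.smul_mul, Matrix.mul_smul, smul_smul,
    invWeightDiag_mul_weightDiag]
  have h : (1 : Matrix (Edge W) (Edge W) ℂ) - (s₂ * s₁) • 1 = (1 - s₁ * s₂) • 1 := by
    rw [sub_smul, one_smul, mul_comm]
  rw [h, det_smul, det_one, mul_one]

theorem tailMat_mul_one_add_bumpMat_mul_headMat (s₁ s₂ u₁ u₂ : ℂ) :
    tailMat W * (1 + bumpMat W s₁ s₂) * headMat W u₁ u₂ =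
      u₁ • W + u₂ • Wstar W + (s₁ * u₂) • Dout W + (s₂ * u₁) • Din W := by
  rw [tailMat, bumpMat, headMat, ← fromBlocks_one, fromBlocks_add, fromCols_mul_fromBlocks,
    fromCols_mul_fromRows]
  simp only [add_zero, zero_add, Matrix.mul_one, Matrix.add_mul, Matrix.mul_smul,
    Matrix.smul_mul, ← Matrix.mul_assoc]
  rw [Matrix.mul_assoc (headInc W) (invWeightDiag W), invWeightDiag_mul_weightDiag,
    Matrix.mul_assoc (tailInc W) (weightDiag W) (invWeightDiag W),
    weightDiag_mul_invWeightDiag, Matrix.mul_one, Matrix.mul_one, headInc_mul_transpose,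
    tailInc_mul_transpose, tailInc_mul_weightDiag_mul_headInc_transpose,
    headInc_mul_invWeightDiag_mul_tailInc_transpose]
  module

end ZetaStmt1

open ZetaStmt1

theorem stmt_1_general {V : Type*} [Fintype V] [DecidableEq V] (W : Matrix V V ℂ)
    (t₃ t₄ u₁ u₂ : ℂ) :
    (1 - (u₁ * (t₃ - 1)) * (u₂ * (t₄ - 1))) ^ Fintype.card V *
        ((1 : Matrix (BiEdge W) (BiEdge W) ℂ) - M W 1 1 t₃ t₄ u₁ u₂).det =
      (1 - (u₁ * (t₃ - 1)) * (u₂ * (t₄ - 1))) ^ Fintype.card (Edge W) *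
        ((1 - (u₁ * (t₃ - 1)) * (u₂ * (t₄ - 1))) • (1 : Matrix V V ℂ)
          - u₁ • W - u₂ • Wstar W
          - ((u₁ * (t₃ - 1)) * u₂) • Dout W - ((u₂ * (t₄ - 1)) * u₁) • Din W).det := by
  set s₁ := u₁ * (t₃ - 1)
  set s₂ := u₂ * (t₄ - 1)
  set c := 1 - s₁ * s₂
  have key := det_one_sub_mul_add_mul_det_one_add (headMat W u₁ u₂) (tailMat W)
    (bumpMat W s₁ s₂) c (by rw [bumpMat_mul_self, sub_sub_cancel])
  rw [← M_one_one_eq, det_one_add_bumpMat, tailMat_mul_one_add_bumpMat_mul_headMat,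
    Fintype.card_sum, pow_add] at key
  simp only [sub_add_eq_sub_sub] at key
  rcases eq_or_ne (c ^ Fintype.card (Edge W)) 0 with hcm | hcm
  · obtain ⟨hc, hm⟩ := pow_eq_zero_iff'.mp hcm
    have : Nonempty V := (Fintype.card_pos_iff.mp (Nat.pos_of_ne_zero hm)).map fun a => a.1.1
    rw [hcm, zero_mul, hc, zero_pow Fintype.card_ne_zero, zero_mul]
  · exact mul_left_cancel₀ hcm (by linear_combination key)

/-- The polynomial expression for the reversing zeta function. -/
theorem stmt_1 {V : Type*} [Fintype V] [DecidableEq V] (W : Matrix V V ℂ)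
    (hrec : Reciprocal W) (t₃ t₄ u₁ u₂ : ℂ) :
    (1 - (u₁ * (t₃ - 1)) * (u₂ * (t₄ - 1))) ^ Fintype.card V *
        ((1 : Matrix (BiEdge W) (BiEdge W) ℂ) - M W 1 1 t₃ t₄ u₁ u₂).det =
      (1 - (u₁ * (t₃ - 1)) * (u₂ * (t₄ - 1))) ^ Fintype.card (Edge W) *
        ((1 - (u₁ * (t₃ - 1)) * (u₂ * (t₄ - 1))) • (1 : Matrix V V ℂ)
          - u₁ • W - u₂ • Wstar W
          - ((u₁ * (t₃ - 1)) * u₂) • Dout W - ((u₂ * (t₄ - 1)) * u₁) • Din W).det :=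
  stmt_1_general W t₃ t₄ u₁ u₂
end
end

section
/- Let A₀ be a k×k complex matrix, X a c×c complex matrix, and for i = 1,…,m let B_i be k×c and B_i' be c×k complex matrices. Let Z be the (k+mc)×(k+mc) block matrix whose top-left block is A₀, whose top block row is (B₁, …, B_m), whose left block column is (B₁', …, B_m'), whose remaining diagonal blocks all equal X, and whose remaining off-diagonal blocks are zero. Then det(X)^k · det(Z) = det(X)^m · det( det(X)·A₀ − Σ_{i=1}^{m} B_i · adj(X) · B_i' ), where adj denotes the adjugate matrix. -/
open Matrix

/-- The block-determinant identity underlying the computation of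
characteristic polynomials of invaded digraphs. -/
theorem stmt_3 (k c m : ℕ) (A₀ : Matrix (Fin k) (Fin k) ℂ) (X : Matrix (Fin c) (Fin c) ℂ)
    (B : Fin m → Matrix (Fin k) (Fin c) ℂ) (B' : Fin m → Matrix (Fin c) (Fin k) ℂ)
    (Z : Matrix (Fin k ⊕ Fin m × Fin c) (Fin k ⊕ Fin m × Fin c) ℂ)
    (hZ : Z = Matrix.of fun i j =>
      match i, j with
      | Sum.inl a, Sum.inl b => A₀ a b
      | Sum.inl a, Sum.inr (i, x) => B i a x
      | Sum.inr (i, x), Sum.inl b => B' i x b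
      | Sum.inr (i, x), Sum.inr (i', y) => if i = i' then X x y else 0) :
    X.det ^ k * Z.det =
      X.det ^ m * (X.det • A₀ - ∑ i, B i * X.adjugate * B' i).det := by
  classical
  set Br : Matrix (Fin k) (Fin m × Fin c) ℂ := Matrix.of fun a p => B p.1 a p.2 with hBrdef
  set Bc : Matrix (Fin m × Fin c) (Fin k) ℂ := Matrix.of fun p b => B' p.1 p.2 b with hBcdef
  set D : Matrix (Fin m × Fin c) (Fin m × Fin c) ℂ :=
    Matrix.of fun p q => if p.1 = q.1 then X p.2 q.2 else 0 with hDdef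
  set E : Matrix (Fin m × Fin c) (Fin m × Fin c) ℂ :=
    Matrix.of fun p q => if p.1 = q.1 then X.adjugate p.2 q.2 else 0 with hEdef
  have hZ' : Z = fromBlocks A₀ Br Bc D := by
    subst hZ
    ext i j
    rcases i with a | ⟨i, x⟩ <;> rcases j with b | ⟨j, y⟩ <;> rfl
  have hDE : D * E = X.det • (1 : Matrix (Fin m × Fin c) (Fin m × Fin c) ℂ) := by
    ext ⟨i, x⟩ ⟨j, y⟩
    simp only [Matrix.mul_apply, hDdef, hEdef, Matrix.of_apply, Fintype.sum_prod_type,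
      Matrix.smul_apply, Matrix.one_apply, smul_eq_mul, ite_mul, zero_mul, mul_ite, mul_zero]
    rw [Finset.sum_eq_single i]
    · by_cases h : i = j
      · subst h
        simp [← Matrix.mul_apply, Matrix.mul_adjugate, Matrix.smul_apply, Matrix.one_apply,
          Prod.ext_iff, smul_eq_mul, mul_comm]
      · simp [h, Prod.ext_iff]
    · intro b _ hb
      simp [Ne.symm hb]
    · simp
  have hdetD : D.det = X.det ^ m := by
    have : D = (Matrix.reindex (Equiv.prodComm (Fin c) (Fin m)) (Equiv.prodComm (Fin c) (Fin m)))
        (Matrix.blockDiagonal fun _ : Fin m => X) := by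
      ext ⟨i, x⟩ ⟨j, y⟩
      simp [hDdef, Matrix.blockDiagonal_apply, eq_comm]
    rw [this, Matrix.det_reindex_self, Matrix.det_blockDiagonal, Finset.prod_const,
      Finset.card_univ, Fintype.card_fin]
  have hBEB : Br * E * Bc = ∑ i, B i * X.adjugate * B' i := by
    ext a b
    simp only [Matrix.sum_apply, Matrix.mul_apply, hBrdef, hEdef, hBcdef, Matrix.of_apply,
      Fintype.sum_prod_type, mul_ite, mul_zero, ite_mul, zero_mul]
    refine Finset.sum_congr rfl fun i _ => Finset.sum_congr rfl fun x _ => ?_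
    congr 1
    rw [Finset.sum_eq_single i]
    · simp
    · intro j _ hj
      simp [hj]
    · simp
  set N : Matrix (Fin k ⊕ Fin m × Fin c) (Fin k ⊕ Fin m × Fin c) ℂ :=
    fromBlocks (X.det • 1) 0 (-(E * Bc)) 1 with hNdef
  have hZN : Z * N = fromBlocks (X.det • A₀ - ∑ i, B i * X.adjugate * B' i) Br 0 D := by
    rw [hZ', hNdef, Matrix.fromBlocks_multiply]
    simp only [Matrix.mul_zero, Matrix.mul_one, zero_add, add_zero, Matrix.mul_neg,
      ← Matrix.mul_assoc, hBEB, hDE, Matrix.mul_smul, Matrix.smul_mul, Matrix.one_mul,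
      ← sub_eq_add_neg, sub_self]
  have hdetN : N.det = X.det ^ k := by
    rw [hNdef, Matrix.det_fromBlocks_zero₁₂, Matrix.det_one, mul_one, Matrix.det_smul,
      Matrix.det_one, mul_one, Fintype.card_fin]
  have h1 : Z.det * N.det = (X.det • A₀ - ∑ i, B i * X.adjugate * B' i).det * D.det := by
    rw [← Matrix.det_mul, hZN, Matrix.det_fromBlocks_zero₂₁]
  rw [hdetN, hdetD] at h1
  linear_combination h1
end

section
/- For every digraph G with n vertices and m edges and every invader S with c invasive vertices, the characteristic polynomial χ(x) = det(x·I_{n+mc} − A_{S≻G}) of the invaded digraph satisfies, identically in x, χ_C(x)^n · χ(x) = χ_C(x)^m · det( x·χ_C(x)·I_n − (a_tt·χ_C(x) + p_tt(x))·D^out_G − (a_hh·χ_C(x) + p_hh(x))·D^in_G − (a_th·χ_C(x) + p_th(x))·A_G − (a_ht·χ_C(x) + p_ht(x))·A_Gᵀ ). -/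
open Matrix

noncomputable section
open scoped Classical

namespace InvasionStmt4

/-- The adjacency matrix of the digraph with edge set `E`, tail map `t` and head map `h`:
`(A_G)_{uv}` is the number of edges `e` with `t e = u` and `h e = v`. -/
def adjOf {V E : Type*} [Fintype E] (t h : E → V) : Matrix V V ℂ :=
  Matrix.of fun u v => ((Finset.univ.filter fun e => t e = u ∧ h e = v).card : ℂ)

/-- The out-degree matrix: diagonal matrix of row sums. -/
def doutOf {V : Type*} [Fintype V] [DecidableEq V] (A : Matrix V V ℂ) : Matrix V V ℂ :=
  Matrix.diagonal fun u => ∑ v, A u v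

/-- The in-degree matrix: diagonal matrix of column sums. -/
def dinOf {V : Type*} [Fintype V] [DecidableEq V] (A : Matrix V V ℂ) : Matrix V V ℂ :=
  Matrix.diagonal fun v => ∑ u, A u v

/-- The adjacency matrix of the invaded digraph `S ≻ G`, where the invader `S` is given
by the data `a_tt, a_th, a_ht, a_hh`, row vectors `rt, rh`, column vectors `ct, ch`, and the
adjacency matrix `AC` of the subdigraph induced on the `c` invasive vertices. -/
def invadedAdj {V E : Type*} [Fintype V] [DecidableEq V] [Fintype E] [DecidableEq E]
    (t h : E → V) (c : ℕ) (att ath aht ahh : ℕ) (rt rh : Fin c → ℕ) (ct ch : Fin c → ℕ)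
    (AC : Matrix (Fin c) (Fin c) ℕ) :
    Matrix (V ⊕ E × Fin c) (V ⊕ E × Fin c) ℂ :=
  Matrix.of fun i j =>
    match i, j with
    | Sum.inl u, Sum.inl v =>
        ((att : ℂ) • doutOf (adjOf t h) + (ahh : ℂ) • dinOf (adjOf t h)
          + (ath : ℂ) • adjOf t h + (aht : ℂ) • (adjOf t h)ᵀ) u v
    | Sum.inl w, Sum.inr (e, j) =>
        (if w = t e then (rt j : ℂ) else 0) + (if w = h e then (rh j : ℂ) else 0)
    | Sum.inr (e, j), Sum.inl w =>
        (if w = t e then (ct j : ℂ) else 0) + (if w = h e then (ch j : ℂ) else 0)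
    | Sum.inr (e, j), Sum.inr (e', j') => if e = e' then (AC j j' : ℂ) else 0

/-- `χ_C(x) = det(x·I_c − A_C)`. -/
def chiC (c : ℕ) (AC : Matrix (Fin c) (Fin c) ℕ) (x : ℂ) : ℂ :=
  (x • (1 : Matrix (Fin c) (Fin c) ℂ) - AC.map (Nat.cast : ℕ → ℂ)).det

/-- `p_{vw}(x) = r_v · adj(x·I_c − A_C) · c_w`. -/
def pPoly (c : ℕ) (AC : Matrix (Fin c) (Fin c) ℕ) (r cv : Fin c → ℕ) (x : ℂ) : ℂ :=
  ∑ j, ∑ k, (r j : ℂ) *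
    (x • (1 : Matrix (Fin c) (Fin c) ℂ) - AC.map (Nat.cast : ℕ → ℂ)).adjugate j k * (cv k : ℂ)

end InvasionStmt4

open InvasionStmt4

/-! Order the vertices of `S ≻ G` as `V ⊕ E × Fin c`. Then `x • 1 - A_{S≻G}` is a block matrix whose
lower right block is `1 ⊗ₖ (x • 1 - A_C)`, so when `χ_C(x) ≠ 0` its determinant is
`χ_C(x) ^ m` times the determinant of a Schur complement. The correction term of that complement
splits according to the endpoints (tail or head) through which an invasive vertex is entered and
left; the four edge-count matrices that arise are `D^out`, `A_G`, `A_Gᵀ` and `D^in`, weighted by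
the `p_{vw}(x)`. Multiplying by `χ_C(x) ^ n` clears the inverse of `x • 1 - A_C`. Both sides are
continuous in `x` and `χ_C` has finitely many roots, so the identity extends to every `x`. -/

open scoped Kronecker

theorem det_fromBlocks_one_kronecker_mul_pow {K n ι k : Type*} [Field K]
    [Fintype n] [DecidableEq n] [Fintype ι] [DecidableEq ι] [Fintype k] [DecidableEq k]
    (A : Matrix n n K) (B : Matrix n (ι × k) K) (C : Matrix (ι × k) n K) (X : Matrix k k K)
    (hX : X.det ≠ 0) :
    X.det ^ Fintype.card n * (fromBlocks A B C ((1 : Matrix ι ι K) ⊗ₖ X)).det =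
      X.det ^ Fintype.card ι *
        (X.det • A - B * ((1 : Matrix ι ι K) ⊗ₖ X.adjugate) * C).det := by
  have hD : IsUnit ((1 : Matrix ι ι K) ⊗ₖ X).det := by
    rw [det_kronecker, det_one, one_pow, one_mul]
    exact (pow_ne_zero _ hX).isUnit
  let := ((1 : Matrix ι ι K) ⊗ₖ X).invertibleOfIsUnitDet hD
  have hinv : ⅟((1 : Matrix ι ι K) ⊗ₖ X) = X.det⁻¹ • ((1 : Matrix ι ι K) ⊗ₖ X.adjugate) := by
    rw [invOf_eq_nonsing_inv, inv_kronecker, inv_one, inv_def, Ring.inverse_eq_inv',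
      kronecker_smul]
  have hsmul : X.det • A - B * ((1 : Matrix ι ι K) ⊗ₖ X.adjugate) * C =
      X.det • (A - B * ⅟((1 : Matrix ι ι K) ⊗ₖ X) * C) := by
    rw [hinv, smul_sub, Matrix.mul_smul, Matrix.smul_mul, smul_smul, mul_inv_cancel₀ hX,
      one_smul]
  rw [det_fromBlocks₂₂, hsmul, det_smul, det_kronecker, det_one, one_pow, one_mul]
  ring

theorem eq_of_continuous_of_eval_ne_zero {𝕜 Y : Type*} [NontriviallyNormedField 𝕜]
    [CompleteSpace 𝕜] [TopologicalSpace Y] [T2Space Y] {f g : 𝕜 → Y} (hf : Continuous f)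
    (hg : Continuous g) {p : Polynomial 𝕜} (hp : p ≠ 0) (h : ∀ x, p.eval x ≠ 0 → f x = g x)
    (x : 𝕜) : f x = g x :=
  congrFun (hf.ext_on ((Polynomial.finite_setOfPred_isRoot hp).countable.dense_compl 𝕜) hg h) x

namespace InvasionStmt4

def incidenceBlock {V E k R : Type*} [Zero R] (p : E → V) (r : k → R) : Matrix V (E × k) R :=
  of fun u q => if u = p q.1 then r q.2 else 0

section incidence

variable {V E k : Type*} [Fintype E] [Fintype k]

theorem incidenceBlock_mul_one_kronecker [DecidableEq E] {R : Type*} [CommSemiring R]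
    (p : E → V) (r : k → R) (Y : Matrix k k R) :
    incidenceBlock p r * ((1 : Matrix E E R) ⊗ₖ Y) = incidenceBlock p (r ᵥ* Y) := by
  ext u ⟨e, j⟩
  simp only [incidenceBlock, mul_apply, of_apply, kroneckerMap_apply, one_apply,
    Fintype.sum_prod_type, vecMul, dotProduct]
  split_ifs with hu <;> simp [hu, eq_comm]

theorem incidenceBlock_mul_transpose (p q : E → V) (r s : k → ℂ) :
    incidenceBlock p r * (incidenceBlock q s)ᵀ = (r ⬝ᵥ s) • adjOf p q := by
  ext u w
  simp only [incidenceBlock, adjOf, mul_apply, transpose_apply, of_apply, Matrix.smul_apply,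
    Fintype.sum_prod_type, smul_eq_mul, Finset.card_filter, Nat.cast_sum, Finset.mul_sum,
    dotProduct]
  refine Finset.sum_congr rfl fun e _ => ?_
  by_cases hu : u = p e <;> by_cases hw : w = q e <;> simp [hu, hw, eq_comm]

theorem incidenceBlock_mul_one_kronecker_mul_transpose [DecidableEq E] (p q : E → V)
    (r s : k → ℂ) (Y : Matrix k k ℂ) :
    incidenceBlock p r * ((1 : Matrix E E ℂ) ⊗ₖ Y) * (incidenceBlock q s)ᵀ =
      (r ⬝ᵥ Y *ᵥ s) • adjOf p q := by
  rw [incidenceBlock_mul_one_kronecker, incidenceBlock_mul_transpose, dotProduct_mulVec]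

end incidence

section degrees

variable {V E : Type*} [Fintype E] (t h : E → V)

theorem adjOf_swap : adjOf h t = (adjOf t h)ᵀ := by
  ext u w
  simp [adjOf, and_comm]

theorem adjOf_self_eq_doutOf [Fintype V] [DecidableEq V] : adjOf t t = doutOf (adjOf t h) := by
  ext u w
  simp only [adjOf, doutOf, of_apply, diagonal_apply, Finset.card_filter, Nat.cast_sum]
  rw [Finset.sum_comm]
  split_ifs with huw
  · subst huw
    simp [ite_and]
  · refine Finset.sum_eq_zero fun e _ => ?_
    rw [if_neg]
    · simp
    · rintro ⟨rfl, rfl⟩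
      exact huw rfl

theorem adjOf_self_eq_dinOf [Fintype V] [DecidableEq V] : adjOf h h = dinOf (adjOf t h) := by
  rw [adjOf_self_eq_doutOf h t, adjOf_swap]
  rfl

end degrees

theorem chiC_eq_eval_charpoly (c : ℕ) (AC : Matrix (Fin c) (Fin c) ℕ) (x : ℂ) :
    chiC c AC x = (AC.map (Nat.cast : ℕ → ℂ)).charpoly.eval x := by
  rw [eval_charpoly, chiC, smul_one_eq_diagonal, scalar_apply]

theorem pPoly_eq_dotProduct_mulVec (c : ℕ) (AC : Matrix (Fin c) (Fin c) ℕ) (r s : Fin c → ℕ)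
    (x : ℂ) :
    pPoly c AC r s x = (Nat.cast ∘ r : Fin c → ℂ) ⬝ᵥ
      (x • (1 : Matrix (Fin c) (Fin c) ℂ) - AC.map Nat.cast).adjugate *ᵥ (Nat.cast ∘ s) := by
  simp only [pPoly, dotProduct, mulVec, Finset.mul_sum, Function.comp_apply, mul_assoc]

section invaded

variable {V E : Type*} [Fintype V] [DecidableEq V] [Fintype E] [DecidableEq E]
  (t h : E → V) (c : ℕ) (att ath aht ahh : ℕ) (rt rh : Fin c → ℕ) (ct ch : Fin c → ℕ)
  (AC : Matrix (Fin c) (Fin c) ℕ) (x : ℂ)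

theorem smul_one_sub_invadedAdj_eq_fromBlocks :
    x • (1 : Matrix (V ⊕ E × Fin c) (V ⊕ E × Fin c) ℂ)
        - invadedAdj t h c att ath aht ahh rt rh ct ch AC =
      fromBlocks
        (x • 1 - ((att : ℂ) • doutOf (adjOf t h) + (ahh : ℂ) • dinOf (adjOf t h)
          + (ath : ℂ) • adjOf t h + (aht : ℂ) • (adjOf t h)ᵀ))
        (-(incidenceBlock t (Nat.cast ∘ rt) + incidenceBlock h (Nat.cast ∘ rh)))
        (-(incidenceBlock t (Nat.cast ∘ ct) + incidenceBlock h (Nat.cast ∘ ch))ᵀ)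
        ((1 : Matrix E E ℂ) ⊗ₖ (x • 1 - AC.map Nat.cast)) := by
  ext (u | ⟨e, j⟩) (w | ⟨e', j'⟩)
  · simp [invadedAdj, one_apply]
  · simp [invadedAdj, incidenceBlock]
  · simp [invadedAdj, incidenceBlock]
  · by_cases he : e = e' <;> by_cases hj : j = j' <;> simp [invadedAdj, one_apply, he, hj]

theorem det_smul_one_sub_invadedAdj_of_chiC_ne_zero (hx : chiC c AC x ≠ 0) :
    chiC c AC x ^ Fintype.card V *
        (x • (1 : Matrix (V ⊕ E × Fin c) (V ⊕ E × Fin c) ℂ)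
          - invadedAdj t h c att ath aht ahh rt rh ct ch AC).det =
      chiC c AC x ^ Fintype.card E *
        ((x * chiC c AC x) • (1 : Matrix V V ℂ)
          - ((att : ℂ) * chiC c AC x + pPoly c AC rt ct x) • doutOf (adjOf t h)
          - ((ahh : ℂ) * chiC c AC x + pPoly c AC rh ch x) • dinOf (adjOf t h)
          - ((ath : ℂ) * chiC c AC x + pPoly c AC rt ch x) • adjOf t h
          - ((aht : ℂ) * chiC c AC x + pPoly c AC rh ct x) • (adjOf t h)ᵀ).det := by
  rw [smul_one_sub_invadedAdj_eq_fromBlocks, chiC] at *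
  rw [det_fromBlocks_one_kronecker_mul_pow _ _ _ _ hx]
  congr 2
  simp only [Matrix.neg_mul, Matrix.mul_neg, transpose_add, Matrix.add_mul, Matrix.mul_add,
    incidenceBlock_mul_one_kronecker_mul_transpose, adjOf_self_eq_doutOf t h,
    adjOf_self_eq_dinOf t h, adjOf_swap t h, pPoly_eq_dotProduct_mulVec]
  module

end invaded

end InvasionStmt4

/-- The characteristic polynomial of an invaded digraph. -/
theorem stmt_4 {V E : Type*} [Fintype V] [DecidableEq V] [Fintype E] [DecidableEq E]
    (t h : E → V) (c : ℕ) (att ath aht ahh : ℕ) (rt rh : Fin c → ℕ) (ct ch : Fin c → ℕ)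
    (AC : Matrix (Fin c) (Fin c) ℕ) (x : ℂ) :
    chiC c AC x ^ Fintype.card V *
        (x • (1 : Matrix (V ⊕ E × Fin c) (V ⊕ E × Fin c) ℂ)
          - invadedAdj t h c att ath aht ahh rt rh ct ch AC).det =
      chiC c AC x ^ Fintype.card E *
        ((x * chiC c AC x) • (1 : Matrix V V ℂ)
          - ((att : ℂ) * chiC c AC x + pPoly c AC rt ct x) • doutOf (adjOf t h)
          - ((ahh : ℂ) * chiC c AC x + pPoly c AC rh ch x) • dinOf (adjOf t h)
          - ((ath : ℂ) * chiC c AC x + pPoly c AC rt ch x) • adjOf t h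
          - ((aht : ℂ) * chiC c AC x + pPoly c AC rh ct x) • (adjOf t h)ᵀ).det := by
  have hχ : Continuous (chiC c AC) := by unfold chiC; fun_prop
  have hp : ∀ r s, Continuous (pPoly c AC r s) := fun r s => by unfold pPoly; fun_prop
  revert x
  refine eq_of_continuous_of_eval_ne_zero ?_ ?_ (charpoly_monic (AC.map (Nat.cast : ℕ → ℂ))).ne_zero
    fun y hy => ?_
  · fun_prop
  · fun_prop
  rw [← chiC_eq_eval_charpoly] at hy
  exact det_smul_one_sub_invadedAdj_of_chiC_ne_zero t h c att ath aht ahh rt rh ct ch AC y hy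
end
end

section
/- Let G and G' be multigraphs on n vertices. If μ_G(x,a,b) = μ_{G'}(x,a,b) for all real a, b > 0 and all x ∈ ℂ, then G and G' have the same degree sequence, i.e., the multisets of diagonal entries of D_G and D_{G'} coincide. -/
open Matrix

noncomputable section

namespace Stmt12

/-- The degree matrix (over `ℂ`) of the multigraph with adjacency matrix `A`. -/
def degC {n : ℕ} (A : Matrix (Fin n) (Fin n) ℕ) : Matrix (Fin n) (Fin n) ℂ :=
  Matrix.diagonal fun i => ((∑ j, A i j : ℕ) : ℂ)

/-- The `a`-lazy `b`-deadly Markov chain function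
`μ_G(x,a,b) = det(x·I + ((a+b)·I + D)⁻¹·(A + a·I))`. -/
def mu {n : ℕ} (A : Matrix (Fin n) (Fin n) ℕ) (x a b : ℂ) : ℂ :=
  (x • (1 : Matrix (Fin n) (Fin n) ℂ) +
    ((a + b) • (1 : Matrix (Fin n) (Fin n) ℂ) + degC A)⁻¹ *
      (A.map (Nat.cast : ℕ → ℂ) + a • (1 : Matrix (Fin n) (Fin n) ℂ))).det

end Stmt12

open Stmt12 Polynomial

namespace Stmt12Aux

/-- Evaluation of the characteristic polynomial of `-M`. -/
lemma eval_char {n : ℕ} (M : Matrix (Fin n) (Fin n) ℂ) (z : ℂ) :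
    (Matrix.charpoly (-M)).eval z = (z • (1 : Matrix (Fin n) (Fin n) ℂ) + M).det := by
  rw [Matrix.charpoly, ← coe_evalRingHom, RingHom.map_det]
  congr 1
  ext i j
  rcases eq_or_ne i j with rfl | h
  · simp [Matrix.charmatrix_apply_eq, Matrix.one_apply]
  · simp [Matrix.charmatrix_apply_ne _ _ _ h, Matrix.one_apply_ne h]

/-- The value of `μ` at `x = 0`. -/
lemma mu_zero {n : ℕ} (A : Matrix (Fin n) (Fin n) ℕ) (a b : ℂ) :
    mu A 0 a b = (Ring.inverse (∏ i, (a + b + ((∑ j, A i j : ℕ) : ℂ)))) *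
      (A.map (Nat.cast : ℕ → ℂ) + a • (1 : Matrix (Fin n) (Fin n) ℂ)).det := by
  have hd : (a + b) • (1 : Matrix (Fin n) (Fin n) ℂ) + degC A =
      Matrix.diagonal (fun i => a + b + ((∑ j, A i j : ℕ) : ℂ)) := by
    rw [degC, Matrix.smul_one_eq_diagonal, Matrix.diagonal_add]
  rw [mu, hd]
  simp [Matrix.det_mul, Matrix.det_nonsing_inv, Matrix.det_diagonal]

lemma ne_zero_aux (a b : ℝ) (ha : 0 < a) (hb : 0 < b) (k : ℕ) :
    (a : ℂ) + (b : ℂ) + (k : ℂ) ≠ 0 := by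
  have : ((a + b + (k : ℝ) : ℝ) : ℂ) ≠ 0 := by
    rw [Complex.ofReal_ne_zero]
    positivity
  push_cast at this
  convert this using 2

end Stmt12Aux

open Stmt12Aux

/-- If the `a`-lazy `b`-deadly Markov chain functions of two multigraphs
on `n` vertices agree for all real `a, b > 0` and all `x ∈ ℂ`, then the multigraphs
have the same degree sequence. -/
theorem stmt_12 {n : ℕ} (A A' : Matrix (Fin n) (Fin n) ℕ)
    (hsymm : Aᵀ = A) (hsymm' : A'ᵀ = A')
    (hmu : ∀ a b : ℝ, 0 < a → 0 < b → ∀ x : ℂ,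
      mu A x (a : ℂ) (b : ℂ) = mu A' x (a : ℂ) (b : ℂ)) :
    (Finset.univ.val.map fun i => ∑ j, A i j) =
      (Finset.univ.val.map fun i => ∑ j, A' i j) := by
  classical
  set Am : Matrix (Fin n) (Fin n) ℂ := A.map (Nat.cast : ℕ → ℂ) with hAm
  set Am' : Matrix (Fin n) (Fin n) ℂ := A'.map (Nat.cast : ℕ → ℂ) with hAm'
  set d : Fin n → ℕ := fun i => ∑ j, A i j with hdd
  set d' : Fin n → ℕ := fun i => ∑ j, A' i j with hdd'
  -- Choose a > 0 with det(a•1 + Am) ≠ 0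
  obtain ⟨a, ha, hdet⟩ : ∃ a : ℝ, 0 < a ∧
      ((a : ℂ) • (1 : Matrix (Fin n) (Fin n) ℂ) + Am).det ≠ 0 := by
    set p := Matrix.charpoly (-Am) with hp
    have hpne : p ≠ 0 := (Matrix.charpoly_monic _).ne_zero
    have hfin : Set.Finite {x : ℂ | p.IsRoot x} := Polynomial.finite_setOf_isRoot hpne
    have hfin' : Set.Finite {a : ℝ | p.IsRoot (a : ℂ)} :=
      Set.Finite.preimage (Complex.ofReal_injective.injOn) hfin
    obtain ⟨a, ha⟩ := ((Set.Ioi_infinite (0:ℝ)).diff hfin').nonempty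
    refine ⟨a, ha.1, fun h => ha.2 ?_⟩
    show p.IsRoot (a : ℂ)
    rw [IsRoot, eval_char]
    exact h
  set detA : ℂ := (Am + (a : ℂ) • (1 : Matrix (Fin n) (Fin n) ℂ)).det with hdA
  set detA' : ℂ := (Am' + (a : ℂ) • (1 : Matrix (Fin n) (Fin n) ℂ)).det with hdA'
  have hdetA : detA ≠ 0 := by rwa [hdA, add_comm]
  -- The key identity, for all b > 0
  have key : ∀ b : ℝ, 0 < b →
      detA * ∏ i, ((a : ℂ) + (b : ℂ) + (d' i : ℂ)) =
        detA' * ∏ i, ((a : ℂ) + (b : ℂ) + (d i : ℂ)) := by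
    intro b hb
    have h := hmu a b ha hb 0
    rw [mu_zero, mu_zero] at h
    have hP : (∏ i, ((a : ℂ) + (b : ℂ) + ((∑ j, A i j : ℕ) : ℂ))) ≠ 0 :=
      Finset.prod_ne_zero_iff.mpr fun i _ => ne_zero_aux a b ha hb _
    have hP' : (∏ i, ((a : ℂ) + (b : ℂ) + ((∑ j, A' i j : ℕ) : ℂ))) ≠ 0 :=
      Finset.prod_ne_zero_iff.mpr fun i _ => ne_zero_aux a b ha hb _
    rw [Ring.inverse_eq_inv'] at h
    rw [inv_mul_eq_div, inv_mul_eq_div, div_eq_div_iff hP hP'] at h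
    simp only [hdd, hdd', hdA, hdA', hAm, hAm']
    exact h
  -- Polynomial identity
  set mA : Multiset ℂ := Finset.univ.val.map (fun i => -((a : ℂ) + (d i : ℂ))) with hmA
  set mA' : Multiset ℂ := Finset.univ.val.map (fun i => -((a : ℂ) + (d' i : ℂ))) with hmA'
  set P : ℂ[X] := C detA * (mA'.map fun r => X - C r).prod with hPdef
  set Q : ℂ[X] := C detA' * (mA.map fun r => X - C r).prod with hQdef
  have evalP : ∀ z : ℂ, P.eval z = detA * ∏ i, (z + ((a : ℂ) + (d' i : ℂ))) := by
    intro z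
    rw [hPdef, hmA']
    rw [eval_mul, eval_C, Polynomial.eval_multiset_prod]
    congr 1
    rw [Multiset.map_map, Multiset.map_map]
    rw [Finset.prod_eq_multiset_prod]
    congr 1
    apply Multiset.map_congr rfl
    intro i _
    simp only [Function.comp_apply, eval_sub, eval_X, eval_C]
    ring
  have evalQ : ∀ z : ℂ, Q.eval z = detA' * ∏ i, (z + ((a : ℂ) + (d i : ℂ))) := by
    intro z
    rw [hQdef, hmA]
    rw [eval_mul, eval_C, Polynomial.eval_multiset_prod]
    congr 1
    rw [Multiset.map_map, Multiset.map_map]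
    rw [Finset.prod_eq_multiset_prod]
    congr 1
    apply Multiset.map_congr rfl
    intro i _
    simp only [Function.comp_apply, eval_sub, eval_X, eval_C]
    ring
  have hPQ : P = Q := by
    apply Polynomial.eq_of_infinite_eval_eq
    refine Set.Infinite.mono ?_ (Set.Infinite.image
      (Complex.ofReal_injective.injOn) (Set.Ioi_infinite (0:ℝ)))
    rintro z ⟨b, hb, rfl⟩
    rw [Set.mem_setOf_eq, evalP, evalQ]
    have := key b hb
    calc detA * ∏ i, ((b : ℂ) + ((a : ℂ) + (d' i : ℂ)))
        = detA * ∏ i, ((a : ℂ) + (b : ℂ) + (d' i : ℂ)) := by ring_nf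
      _ = detA' * ∏ i, ((a : ℂ) + (b : ℂ) + (d i : ℂ)) := this
      _ = detA' * ∏ i, ((b : ℂ) + ((a : ℂ) + (d i : ℂ))) := by ring_nf
  -- leading coefficients : detA = detA'
  have hmonA : ((mA.map fun r => X - C r).prod).Monic :=
    Polynomial.monic_multiset_prod_of_monic _ _ fun r _ => Polynomial.monic_X_sub_C r
  have hmonA' : ((mA'.map fun r => X - C r).prod).Monic :=
    Polynomial.monic_multiset_prod_of_monic _ _ fun r _ => Polynomial.monic_X_sub_C r
  have hcardA : Multiset.card mA = n := by simp [hmA]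
  have hcardA' : Multiset.card mA' = n := by simp [hmA']
  have hlead : detA = detA' := by
    have h1 : P.leadingCoeff = detA := by
      rw [hPdef, Polynomial.leadingCoeff_mul, Polynomial.leadingCoeff_C,
        hmonA'.leadingCoeff, mul_one]
    have h2 : Q.leadingCoeff = detA' := by
      rw [hQdef, Polynomial.leadingCoeff_mul, Polynomial.leadingCoeff_C,
        hmonA.leadingCoeff, mul_one]
    rw [← h1, ← h2, hPQ]
  -- cancel and compare roots
  have hprod : (mA'.map fun r => X - C r).prod = (mA.map fun r => X - C r).prod := by
    have : C detA * (mA'.map fun r => X - C r).prod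
        = C detA * (mA.map fun r => X - C r).prod := by
      rw [← hPdef, hPQ, hQdef, hlead]
    exact mul_left_cancel₀ (by simpa using hdetA) this
  have hroots : mA' = mA := by
    rw [← Polynomial.roots_multiset_prod_X_sub_C mA',
      ← Polynomial.roots_multiset_prod_X_sub_C mA, hprod]
  -- conclude
  have hf : Function.Injective (fun k : ℕ => -((a : ℂ) + (k : ℂ))) := by
    intro x y h
    simpa [neg_inj, add_right_inj, Nat.cast_inj] using h
  apply Multiset.map_injective hf
  rw [Multiset.map_map, Multiset.map_map]
  exact hroots.symm
end
end

section
/- Let G and G' be simple graphs on n vertices and let c ∈ ℂ. If μ_G(x,a,c) = μ_{G'}(x,a,c) for all x ∈ ℂ and all a ∈ ℂ for which both (a+c)·I_n + D_G and (a+c)·I_n + D_{G'} are invertible, then G and G' have the same degree sequence, i.e., the multisets of diagonal entries of D_G and D_{G'} coincide. -/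
open Matrix

noncomputable section

namespace Stmt13

/-- The degree matrix of the graph with (complex-valued 0/1) adjacency matrix `A`. -/
def degC {n : ℕ} (A : Matrix (Fin n) (Fin n) ℂ) : Matrix (Fin n) (Fin n) ℂ :=
  Matrix.diagonal fun i => ∑ j, A i j

/-- The `a`-lazy `b`-deadly Markov chain function
`μ_G(x,a,b) = det(x·I + ((a+b)·I + D)⁻¹·(A + a·I))`. -/
def mu {n : ℕ} (A : Matrix (Fin n) (Fin n) ℂ) (x a b : ℂ) : ℂ :=
  (x • (1 : Matrix (Fin n) (Fin n) ℂ) +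
    ((a + b) • (1 : Matrix (Fin n) (Fin n) ℂ) + degC A)⁻¹ *
      (A + a • (1 : Matrix (Fin n) (Fin n) ℂ))).det

end Stmt13

open Stmt13

namespace Stmt13Aux

open Polynomial

lemma eval_charpoly' {m : Type*} [DecidableEq m] [Fintype m] (M : Matrix m m ℂ) (x : ℂ) :
    (Matrix.charpoly M).eval x = (x • (1 : Matrix m m ℂ) - M).det := by
  rw [Matrix.charpoly, ← Polynomial.coe_evalRingHom, RingHom.map_det]
  congr 1
  ext i j
  simp only [RingHom.mapMatrix_apply, Matrix.map_apply, Polynomial.coe_evalRingHom]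
  by_cases h : i = j
  · subst h
    simp [Matrix.charmatrix_apply_eq, Matrix.one_apply]
  · simp [Matrix.charmatrix_apply_ne _ _ _ h, Matrix.one_apply_ne h]

lemma trace_eq_of_det_eq {m : Type*} [DecidableEq m] [Fintype m] [Nonempty m]
    (M M' : Matrix m m ℂ)
    (h : ∀ x : ℂ, (x • (1 : Matrix m m ℂ) + M).det = (x • (1 : Matrix m m ℂ) + M').det) :
    M.trace = M'.trace := by
  have hc : (-M).charpoly = (-M').charpoly := by
    refine Polynomial.funext fun x => ?_
    rw [eval_charpoly', eval_charpoly', sub_neg_eq_add, sub_neg_eq_add]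
    exact h x
  have h1 := Matrix.trace_eq_neg_charpoly_coeff (-M)
  have h2 := Matrix.trace_eq_neg_charpoly_coeff (-M')
  rw [Matrix.trace_neg] at h1 h2
  have : -M.trace = -M'.trace := by rw [h1, h2, hc]
  exact neg_injective this

lemma key {n : ℕ} (d d' : Fin n → ℂ) (S : Set ℂ) (hS : S.Infinite)
    (h : ∀ z ∈ S, (∀ i, z + d i ≠ 0) ∧ (∀ i, z + d' i ≠ 0) ∧
      (∑ i, (z + d i)⁻¹ = ∑ i, (z + d' i)⁻¹)) :
    Finset.univ.val.map d = Finset.univ.val.map d' := by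
  classical
  set V : Finset ℂ := Finset.univ.image d ∪ Finset.univ.image d' with hV
  have hdV : ∀ i, d i ∈ V := fun i =>
    Finset.mem_union_left _ (Finset.mem_image_of_mem d (Finset.mem_univ i))
  have hd'V : ∀ i, d' i ∈ V := fun i =>
    Finset.mem_union_right _ (Finset.mem_image_of_mem d' (Finset.mem_univ i))
  -- fiberwise sum
  have fib : ∀ (e : Fin n → ℂ), (∀ i, e i ∈ V) → ∀ z : ℂ,
      ∑ i, (z + e i)⁻¹ =
        ∑ v ∈ V, ((Finset.univ.filter (fun i => e i = v)).card : ℂ) * (z + v)⁻¹ := by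
    intro e he z
    rw [← Finset.sum_fiberwise_of_maps_to (fun i _ => he i) (fun i => (z + e i)⁻¹)]
    refine Finset.sum_congr rfl fun v hv => ?_
    rw [Finset.sum_congr rfl (fun i hi => by rw [(Finset.mem_filter.mp hi).2]),
      Finset.sum_const, nsmul_eq_mul]
  set r : ℂ → ℂ := fun v =>
    ((Finset.univ.filter (fun i => d i = v)).card : ℂ) -
      ((Finset.univ.filter (fun i => d' i = v)).card : ℂ) with hr
  set Q : Polynomial ℂ := ∑ v ∈ V, Polynomial.C (r v) * ∏ w ∈ V.erase v,
    (Polynomial.X + Polynomial.C w) with hQ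
  have hQeval : ∀ z : ℂ, Q.eval z = ∑ v ∈ V, r v * ∏ w ∈ V.erase v, (z + w) := by
    intro z; simp [hQ, Polynomial.eval_finset_sum, Polynomial.eval_prod]
  have hQ0 : Q = 0 := by
    refine Polynomial.eq_zero_of_infinite_isRoot Q (hS.mono fun z hz => ?_)
    obtain ⟨h1, h2, h3⟩ := h z hz
    have hzw : ∀ w ∈ V, z + w ≠ 0 := by
      intro w hw
      rcases Finset.mem_union.mp hw with hw | hw <;>
        obtain ⟨i, _, rfl⟩ := Finset.mem_image.mp hw
      exacts [h1 i, h2 i]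
    have herase : ∀ v ∈ V, ∏ w ∈ V.erase v, (z + w) = (z + v)⁻¹ * ∏ w ∈ V, (z + w) := by
      intro v hv
      rw [← Finset.mul_prod_erase V _ hv, ← mul_assoc, inv_mul_cancel₀ (hzw v hv), one_mul]
    show Q.IsRoot z
    rw [Polynomial.IsRoot, hQeval,
      Finset.sum_congr rfl (fun v hv => by rw [herase v hv])]
    have := h3
    rw [fib d hdV z, fib d' hd'V z] at this
    calc ∑ v ∈ V, r v * ((z + v)⁻¹ * ∏ w ∈ V, (z + w))
        = (∑ v ∈ V, r v * (z + v)⁻¹) * ∏ w ∈ V, (z + w) := by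
          rw [Finset.sum_mul]; exact Finset.sum_congr rfl fun v _ => by ring
      _ = 0 := by
          have : ∑ v ∈ V, r v * (z + v)⁻¹ = 0 := by
            simp only [hr, sub_mul, Finset.sum_sub_distrib]
            rw [← fib d hdV z, ← fib d' hd'V z, h3, sub_self]
          rw [this, zero_mul]
  have hrv : ∀ v ∈ V, r v = 0 := by
    intro v hv
    have h0 : Q.eval (-v) = 0 := by rw [hQ0]; simp
    rw [hQeval] at h0
    rw [Finset.sum_eq_single_of_mem v hv (fun u hu huv => by
      refine mul_eq_zero_of_right _ (Finset.prod_eq_zero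
        (Finset.mem_erase.mpr ⟨(Ne.symm huv), hv⟩) ?_)
      simp)] at h0
    have hprod : ∏ w ∈ V.erase v, (-v + w) ≠ 0 := by
      rw [Finset.prod_ne_zero_iff]
      intro w hw
      have : w ≠ v := (Finset.mem_erase.mp hw).1
      intro hc
      exact this (by linear_combination hc)
    exact (mul_eq_zero.mp h0).resolve_right hprod
  have hcard : ∀ v : ℂ, (Finset.univ.filter (fun i => d i = v)).card =
      (Finset.univ.filter (fun i => d' i = v)).card := by
    intro v
    by_cases hv : v ∈ V
    · have := hrv v hv
      rw [hr, sub_eq_zero] at this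
      exact_mod_cast this
    · rw [Finset.filter_eq_empty_iff.mpr (fun i _ => fun hc : d i = v => hv (hc ▸ hdV i)),
        Finset.filter_eq_empty_iff.mpr (fun i _ => fun hc : d' i = v => hv (hc ▸ hd'V i))]
  refine Multiset.ext.mpr fun b => ?_
  simp only [Multiset.count_map, ← Finset.filter_val, Finset.card_val]
  rw [Finset.filter_congr (fun (i : Fin n) (_ : i ∈ Finset.univ) =>
      (eq_comm : (b = d i) ↔ (d i = b))),
    Finset.filter_congr (fun (i : Fin n) (_ : i ∈ Finset.univ) =>
      (eq_comm : (b = d' i) ↔ (d' i = b)))]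
  exact hcard b

end Stmt13Aux

/-- Simple graphs: if `μ_G(·,·,c) = μ_{G'}(·,·,c)` for some fixed
`c ∈ ℂ` (wherever both resolvents exist), then `G` and `G'` have the same degree
sequence. -/
theorem stmt_13 {n : ℕ} (A A' : Matrix (Fin n) (Fin n) ℂ)
    (h01 : ∀ i j, A i j = 0 ∨ A i j = 1) (h01' : ∀ i j, A' i j = 0 ∨ A' i j = 1)
    (hsymm : Aᵀ = A) (hsymm' : A'ᵀ = A')
    (hdiag : ∀ i, A i i = 0) (hdiag' : ∀ i, A' i i = 0)
    (c : ℂ)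
    (hmu : ∀ a x : ℂ,
      IsUnit ((a + c) • (1 : Matrix (Fin n) (Fin n) ℂ) + degC A) →
      IsUnit ((a + c) • (1 : Matrix (Fin n) (Fin n) ℂ) + degC A') →
      mu A x a c = mu A' x a c) :
    (Finset.univ.val.map fun i => ∑ j, A i j) =
      (Finset.univ.val.map fun i => ∑ j, A' i j) := by
  classical
  obtain _ | n := n
  · rfl
  · set F : Finset ℂ := ((Finset.univ.image fun i : Fin (n + 1) => -(c + ∑ j, A i j)) ∪
      (Finset.univ.image fun i : Fin (n + 1) => -(c + ∑ j, A' i j))) ∪ {0} with hF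
    have hkey := Stmt13Aux.key (fun i : Fin (n + 1) => c + ∑ j, A i j)
      (fun i : Fin (n + 1) => c + ∑ j, A' i j) ((↑F : Set ℂ)ᶜ)
      (F.finite_toSet.infinite_compl) ?_
    · have h2 := congrArg (Multiset.map (fun x : ℂ => -c + x)) hkey
      rw [Multiset.map_map, Multiset.map_map,
        show ((fun x : ℂ => -c + x) ∘ fun i : Fin (n + 1) => c + ∑ j, A i j) =
          (fun i : Fin (n + 1) => ∑ j, A i j) from funext fun i => neg_add_cancel_left _ _,
        show ((fun x : ℂ => -c + x) ∘ fun i : Fin (n + 1) => c + ∑ j, A' i j) =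
          (fun i : Fin (n + 1) => ∑ j, A' i j) from funext fun i => neg_add_cancel_left _ _]
        at h2
      exact h2
    · intro z hz
      have hzF : z ∉ F := fun hc => hz (Finset.mem_coe.mpr hc)
      have h1 : ∀ i : Fin (n + 1), z + (c + ∑ j, A i j) ≠ 0 := by
        intro i h0
        apply hzF
        rw [hF]
        refine Finset.mem_union_left _ (Finset.mem_union_left _ ?_)
        have : z = -(c + ∑ j, A i j) := eq_neg_of_add_eq_zero_left h0
        rw [this]
        exact Finset.mem_image_of_mem _ (Finset.mem_univ i)
      have h1' : ∀ i : Fin (n + 1), z + (c + ∑ j, A' i j) ≠ 0 := by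
        intro i h0
        apply hzF
        rw [hF]
        refine Finset.mem_union_left _ (Finset.mem_union_right _ ?_)
        have : z = -(c + ∑ j, A' i j) := eq_neg_of_add_eq_zero_left h0
        rw [this]
        exact Finset.mem_image_of_mem _ (Finset.mem_univ i)
      have hz0 : z ≠ 0 := by
        intro h0
        exact hzF (hF ▸ Finset.mem_union_right _ (by simp [h0]))
      refine ⟨h1, h1', ?_⟩
      set v : Fin (n + 1) → ℂ := fun i => (z + c) + ∑ j, A i j with hv
      set v' : Fin (n + 1) → ℂ := fun i => (z + c) + ∑ j, A' i j with hv'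
      have hvne : ∀ i, v i ≠ 0 := fun i hh => h1 i (by rw [← add_assoc]; exact hh)
      have hv'ne : ∀ i, v' i ≠ 0 := fun i hh => h1' i (by rw [← add_assoc]; exact hh)
      have hDv : (z + c) • (1 : Matrix (Fin (n + 1)) (Fin (n + 1)) ℂ) + degC A =
          Matrix.diagonal v := by
        rw [degC, Matrix.smul_one_eq_diagonal, Matrix.diagonal_add]
      have hDv' : (z + c) • (1 : Matrix (Fin (n + 1)) (Fin (n + 1)) ℂ) + degC A' =
          Matrix.diagonal v' := by
        rw [degC, Matrix.smul_one_eq_diagonal, Matrix.diagonal_add]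
      have hU : IsUnit ((z + c) • (1 : Matrix (Fin (n + 1)) (Fin (n + 1)) ℂ) + degC A) := by
        rw [hDv]
        refine (Matrix.isUnit_iff_isUnit_det _).2 ?_
        rw [Matrix.det_diagonal]
        exact isUnit_iff_ne_zero.2 (Finset.prod_ne_zero_iff.2 fun i _ => hvne i)
      have hU' : IsUnit ((z + c) • (1 : Matrix (Fin (n + 1)) (Fin (n + 1)) ℂ) + degC A') := by
        rw [hDv']
        refine (Matrix.isUnit_iff_isUnit_det _).2 ?_
        rw [Matrix.det_diagonal]
        exact isUnit_iff_ne_zero.2 (Finset.prod_ne_zero_iff.2 fun i _ => hv'ne i)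
      have hdet : ∀ x : ℂ,
          (x • (1 : Matrix (Fin (n + 1)) (Fin (n + 1)) ℂ) +
            (Matrix.diagonal v)⁻¹ * (A + z • 1)).det =
          (x • (1 : Matrix (Fin (n + 1)) (Fin (n + 1)) ℂ) +
            (Matrix.diagonal v')⁻¹ * (A' + z • 1)).det := by
        intro x
        have := hmu z x hU hU'
        rw [mu, mu, hDv, hDv'] at this
        exact this
      have htr := Stmt13Aux.trace_eq_of_det_eq _ _ hdet
      have htrace : ∀ (B : Matrix (Fin (n + 1)) (Fin (n + 1)) ℂ) (w : Fin (n + 1) → ℂ),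
          (∀ i, B i i = 0) → (∀ i, w i ≠ 0) →
          Matrix.trace ((Matrix.diagonal w)⁻¹ * (B + z • 1)) = ∑ i, (w i)⁻¹ * z := by
        intro B w hB hw
        have hinv : (Matrix.diagonal w)⁻¹ =
            Matrix.diagonal (fun i => (w i)⁻¹) := by
          refine Matrix.inv_eq_left_inv ?_
          rw [Matrix.diagonal_mul_diagonal,
            show (fun i => (w i)⁻¹ * w i) = fun _ : Fin (n + 1) => (1 : ℂ) from
              funext fun i => inv_mul_cancel₀ (hw i), Matrix.diagonal_one]
        rw [hinv, Matrix.trace]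
        refine Finset.sum_congr rfl fun i _ => ?_
        rw [Matrix.diag]
        rw [Matrix.diagonal_mul]
        simp [hB i]
      rw [htrace A v hdiag hvne, htrace A' v' hdiag' hv'ne] at htr
      rw [← Finset.sum_mul, ← Finset.sum_mul] at htr
      have hsum : ∑ i, (v i)⁻¹ = ∑ i, (v' i)⁻¹ := mul_right_cancel₀ hz0 htr
      calc ∑ i, (z + (c + ∑ j, A i j))⁻¹ = ∑ i, (v i)⁻¹ :=
            Finset.sum_congr rfl fun i _ => by rw [hv, ← add_assoc]
        _ = ∑ i, (v' i)⁻¹ := hsum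
        _ = ∑ i, (z + (c + ∑ j, A' i j))⁻¹ :=
            Finset.sum_congr rfl fun i _ => by rw [hv', ← add_assoc]
end
end

section
/- Let G and G' be simple graphs on the same number n of vertices. Then the following are equivalent: (1) η̄_G = η̄_{G'} as polynomials in (x,t,u); (2) μ_G(x,a,b) = μ_{G'}(x,a,b) for all real a, b > 0 and all x ∈ ℂ; (3) there exists c ∈ ℂ such that μ_G(x,a,c) = μ_{G'}(x,a,c) for all x ∈ ℂ and all a ∈ ℂ for which both (a+c)·I_n + D_G and (a+c)·I_n + D_{G'} are invertible. -/
open Matrix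

noncomputable section

namespace Stmt14

/-- The degree matrix of the graph with (complex-valued 0/1) adjacency matrix `A`. -/
def degC {n : ℕ} (A : Matrix (Fin n) (Fin n) ℂ) : Matrix (Fin n) (Fin n) ℂ :=
  Matrix.diagonal fun i => ∑ j, A i j

/-- The generalized characteristic polynomial of a graph:
`η̄_G(x,t,u) = det(x·I + t·D + u·A)`. -/
def etaBar {n : ℕ} (A : Matrix (Fin n) (Fin n) ℂ) (x t u : ℂ) : ℂ :=
  (x • (1 : Matrix (Fin n) (Fin n) ℂ) + t • degC A + u • A).det

/-- The `a`-lazy `b`-deadly Markov chain function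
`μ_G(x,a,b) = det(x·I + ((a+b)·I + D)⁻¹·(A + a·I))`. -/
def mu {n : ℕ} (A : Matrix (Fin n) (Fin n) ℂ) (x a b : ℂ) : ℂ :=
  (x • (1 : Matrix (Fin n) (Fin n) ℂ) +
    ((a + b) • (1 : Matrix (Fin n) (Fin n) ℂ) + degC A)⁻¹ *
      (A + a • (1 : Matrix (Fin n) (Fin n) ℂ))).det

end Stmt14

open Stmt14

/-! Clearing the denominator `det((a+b)I + D)` turns `μ_G(x,a,b)` into
`η̄_G(x(a+b)+a, x, 1) / η̄_G(a+b, 1, 0)`, so (1) gives (2) and (3); for real `a, b > 0` the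
denominator is nonzero because degrees are nonnegative. Conversely, (2) (with `c = 1`) and (3)
both give, after extending polynomial identities from infinitely many points, the cross-multiplied
identity `η̄_G(x(a+c)+a, x, 1) P_{G'}(a+c) = η̄_{G'}(x(a+c)+a, x, 1) P_G(a+c)` for all `a, x`,
where `P_G(s) = det(sI + D_G) = ∏ (s + d_i)`. Since `A` has zero diagonal, the coefficient of
`x^(n-1)` in `det(x((a+c)I + D) + aI + A)` is `a P_G'(a+c)`, so `P_G'/P_G = P_{G'}'/P_{G'}`
and the monic polynomials `P_G`, `P_{G'}` coincide. Cancelling them, `η̄_G(·,·,1)` and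
`η̄_{G'}(·,·,1)` agree, and homogeneity of `η̄` in `(x,t,u)` gives the rest. -/

open Polynomial Filter

section PolyFun

variable {R : Type*} [CommRing R]

def IsPolyFun (f : R → R) : Prop := ∃ p : R[X], ∀ z, f z = p.eval z

namespace IsPolyFun

variable {f g : R → R}

lemma const (c : R) : IsPolyFun fun _ : R => c := ⟨C c, fun _ => eval_C.symm⟩

lemma id : IsPolyFun fun z : R => z := ⟨X, fun _ => eval_X.symm⟩

lemma add (hf : IsPolyFun f) (hg : IsPolyFun g) : IsPolyFun fun z => f z + g z := by
  obtain ⟨p, hp⟩ := hf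
  obtain ⟨q, hq⟩ := hg
  exact ⟨p + q, fun z => by simp only [eval_add, hp, hq]⟩

lemma mul (hf : IsPolyFun f) (hg : IsPolyFun g) : IsPolyFun fun z => f z * g z := by
  obtain ⟨p, hp⟩ := hf
  obtain ⟨q, hq⟩ := hg
  exact ⟨p * q, fun z => by simp only [eval_mul, hp, hq]⟩

lemma det {ι : Type*} [Fintype ι] [DecidableEq ι] {M : R → Matrix ι ι R}
    (hM : ∀ i j, IsPolyFun fun z => M z i j) : IsPolyFun fun z => (M z).det := by
  choose p hp using hM
  refine ⟨(Matrix.of p).det, fun z => ?_⟩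
  rw [← coe_evalRingHom, RingHom.map_det]
  exact congrArg Matrix.det (Matrix.ext fun i j => by simp [hp])

lemma eq_of_frequently_eq [IsDomain R] (hf : IsPolyFun f) (hg : IsPolyFun g)
    (h : ∃ᶠ z in cofinite, f z = g z) : f = g := by
  obtain ⟨p, hp⟩ := hf
  obtain ⟨q, hq⟩ := hg
  have hpq : p = q := eq_of_infinite_eval_eq p q <| by
    simpa only [hp, hq] using frequently_cofinite_iff_infinite.mp h
  funext z
  rw [hp, hq, hpq]

end IsPolyFun

end PolyFun

namespace Polynomial

variable {R : Type*} [CommRing R]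

lemma coeff_X_mul_derivative (p : R[X]) (k : ℕ) :
    (X * derivative p).coeff k = k * p.coeff k := by
  cases k with
  | zero => simp
  | succ k => rw [coeff_X_mul, coeff_derivative, mul_comm]; push_cast; rfl

lemma natDegree_X_mul_derivative_le (p : R[X]) : (X * derivative p).natDegree ≤ p.natDegree :=
  natDegree_le_iff_coeff_eq_zero.mpr fun k hk => by
    rw [coeff_X_mul_derivative, coeff_eq_zero_of_natDegree_lt hk, mul_zero]

lemma Monic.eq_of_derivative_mul_eq [IsDomain R] [CharZero R] {P Q : R[X]} (hP : P.Monic)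
    (hQ : Q.Monic) (hdeg : P.natDegree = Q.natDegree)
    (h : derivative P * Q = derivative Q * P) : P = Q := by
  by_contra hne
  set S := P - Q with hS
  have hS0 : S ≠ 0 := sub_ne_zero.mpr hne
  have hlt : S.natDegree < Q.natDegree := by
    rw [← hdeg]
    refine natDegree_lt_natDegree hS0 (degree_sub_lt_left ?_ hP.ne_zero ?_)
    · rw [degree_eq_natDegree hP.ne_zero, degree_eq_natDegree hQ.ne_zero, hdeg]
    · rw [hP.leadingCoeff, hQ.leadingCoeff]
  -- Euler's operator `X * d/dX` multiplies the top coefficient of a polynomial by its degree.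
  have hEuler : X * derivative S * Q = X * derivative Q * S := by
    rw [hS, derivative_sub]
    linear_combination X * h
  have htop := congrArg (coeff · (S.natDegree + Q.natDegree)) hEuler
  rw [coeff_mul_add_eq_of_natDegree_le (natDegree_X_mul_derivative_le S) le_rfl, add_comm,
    coeff_mul_add_eq_of_natDegree_le (natDegree_X_mul_derivative_le Q) le_rfl,
    coeff_X_mul_derivative, coeff_X_mul_derivative, hQ.coeff_natDegree] at htop
  have hk : (S.natDegree : R) = Q.natDegree :=
    mul_right_cancel₀ (show S.coeff S.natDegree ≠ 0 from leadingCoeff_ne_zero.mpr hS0)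
      (by linear_combination htop)
  exact hlt.ne (Nat.cast_injective hk)

end Polynomial

namespace Matrix

open Finset

variable {ι : Type*} [Fintype ι] [DecidableEq ι]

lemma eval_det_X_smul_add {R : Type*} [CommRing R] (M N : Matrix ι ι R) (z : R) :
    (det ((X : R[X]) • M.map C + N.map C)).eval z = det (z • M + N) := by
  rw [← coe_evalRingHom, RingHom.map_det]
  refine congrArg det (ext fun i j => ?_)
  simp only [RingHom.mapMatrix_apply, map_apply, add_apply, smul_apply, smul_eq_mul,
    coe_evalRingHom, eval_add, eval_mul, eval_X, eval_C]

lemma det_X_smul_one_add {R : Type*} [CommRing R] (B : Matrix ι ι R) :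
    det ((X : R[X]) • 1 + B.map C) = (-B).charpoly := by
  refine congrArg det (ext fun i j => ?_)
  by_cases hij : i = j
  · subst hij; simp
  · simp [hij]

lemma coeff_det_X_smul_diagonal_add {K : Type*} [Field K] [Nonempty ι] {m : ι → K}
    (hm : ∀ i, m i ≠ 0) (N : Matrix ι ι K) :
    (det ((X : K[X]) • (diagonal m).map C + N.map C)).coeff (Fintype.card ι - 1) =
      ∑ i, N i i * ∏ j ∈ univ.erase i, m j := by
  have hinv : diagonal m * diagonal (fun i => (m i)⁻¹) = 1 := by
    rw [diagonal_mul_diagonal, ← diagonal_one]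
    exact congrArg diagonal (funext fun i => mul_inv_cancel₀ (hm i))
  have hfactor : (X : K[X]) • (diagonal m).map C + N.map C =
      (diagonal m).map C * ((X : K[X]) • 1 + (diagonal (fun i => (m i)⁻¹) * N).map C) := by
    rw [Matrix.mul_add, Matrix.mul_smul, Matrix.mul_one, ← Matrix.map_mul, ← Matrix.mul_assoc,
      hinv, Matrix.one_mul]
  have htrace := trace_eq_neg_charpoly_coeff (-(diagonal (fun i => (m i)⁻¹) * N))
  rw [trace_neg, neg_inj] at htrace
  have hdet : ((diagonal m).map C).det = C (∏ i, m i) := by simp [diagonal_map, det_diagonal]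
  rw [hfactor, det_mul, det_X_smul_one_add, hdet, coeff_C_mul, ← htrace, trace, mul_sum]
  refine sum_congr rfl fun i _ => ?_
  rw [← mul_prod_erase univ m (mem_univ i)]
  simp only [diag_apply, diagonal_mul]
  field_simp [hm i]

end Matrix

namespace Stmt14

open Matrix Finset

variable {n : ℕ}

def degreePoly (A : Matrix (Fin n) (Fin n) ℂ) : ℂ[X] := ∏ i, (X + C (∑ j, A i j))

lemma degreePoly_monic (A : Matrix (Fin n) (Fin n) ℂ) : (degreePoly A).Monic :=
  monic_prod_of_monic _ _ fun _ _ => monic_X_add_C _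

lemma natDegree_degreePoly (A : Matrix (Fin n) (Fin n) ℂ) : (degreePoly A).natDegree = n := by
  simp only [degreePoly, natDegree_prod_of_monic _ _ fun _ _ => monic_X_add_C _, natDegree_X_add_C,
    sum_const, card_univ, Fintype.card_fin, smul_eq_mul, mul_one]

lemma smul_one_add_degC (A : Matrix (Fin n) (Fin n) ℂ) (s : ℂ) :
    s • (1 : Matrix (Fin n) (Fin n) ℂ) + degC A = diagonal fun i => s + ∑ j, A i j := by
  rw [degC, smul_one_eq_diagonal, diagonal_add]

lemma etaBar_one_zero (A : Matrix (Fin n) (Fin n) ℂ) (s : ℂ) :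
    etaBar A s 1 0 = det (s • (1 : Matrix (Fin n) (Fin n) ℂ) + degC A) := by
  rw [etaBar, zero_smul, add_zero, one_smul]

lemma eval_degreePoly (A : Matrix (Fin n) (Fin n) ℂ) (s : ℂ) :
    (degreePoly A).eval s = etaBar A s 1 0 := by
  simp [degreePoly, eval_prod, eval_finsetSum, etaBar_one_zero, smul_one_add_degC]

lemma eval_derivative_degreePoly (A : Matrix (Fin n) (Fin n) ℂ) (s : ℂ) :
    (derivative (degreePoly A)).eval s = ∑ i, ∏ j ∈ univ.erase i, (s + ∑ k, A j k) := by
  simp [degreePoly, derivative_prod_finset, eval_finsetSum, eval_prod]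

lemma isUnit_smul_one_add_degC_iff (A : Matrix (Fin n) (Fin n) ℂ) (s : ℂ) :
    IsUnit (s • (1 : Matrix (Fin n) (Fin n) ℂ) + degC A) ↔ etaBar A s 1 0 ≠ 0 := by
  rw [isUnit_iff_isUnit_det, isUnit_iff_ne_zero, etaBar_one_zero]

lemma eventually_etaBar_one_zero_ne_zero (A : Matrix (Fin n) (Fin n) ℂ) (c : ℂ) :
    ∀ᶠ a in cofinite, etaBar A (a + c) 1 0 ≠ 0 := by
  have hroots := ((degreePoly A).comp (X + C c)).finite_setOfPred_isRoot <| by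
    rw [Ne, comp_eq_zero_iff]
    simp [(degreePoly_monic A).ne_zero]
  filter_upwards [hroots.eventually_cofinite_notMem] with a ha
  simpa [eval_degreePoly] using ha

lemma isUnit_smul_one_add_degC_of_re_pos {A : Matrix (Fin n) (Fin n) ℂ}
    (h01 : ∀ i j, A i j = 0 ∨ A i j = 1) {s : ℂ} (hs : 0 < s.re) :
    IsUnit (s • (1 : Matrix (Fin n) (Fin n) ℂ) + degC A) := by
  rw [isUnit_smul_one_add_degC_iff, ← eval_degreePoly, degreePoly, eval_prod]
  refine prod_ne_zero_iff.mpr fun i _ hi => ?_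
  have hdeg : 0 ≤ (∑ j, A i j).re := by
    rw [Complex.re_sum]
    exact sum_nonneg fun j _ => by rcases h01 i j with h | h <;> simp [h]
  have := congrArg Complex.re hi
  simp only [eval_add, eval_X, eval_C, Complex.add_re, Complex.zero_re] at this
  linarith

lemma isPolyFun_etaBar (A : Matrix (Fin n) (Fin n) ℂ) {x t u : ℂ → ℂ} (hx : IsPolyFun x)
    (ht : IsPolyFun t) (hu : IsPolyFun u) : IsPolyFun fun z => etaBar A (x z) (t z) (u z) :=
  IsPolyFun.det fun i j => by
    simp only [Matrix.add_apply, Matrix.smul_apply, smul_eq_mul]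
    exact ((hx.mul (.const _)).add (ht.mul (.const _))).add (hu.mul (.const _))

lemma mu_mul_etaBar (A : Matrix (Fin n) (Fin n) ℂ) (x a b : ℂ)
    (hU : IsUnit ((a + b) • (1 : Matrix (Fin n) (Fin n) ℂ) + degC A)) :
    mu A x a b * etaBar A (a + b) 1 0 = etaBar A (x * (a + b) + a) x 1 := by
  rw [etaBar_one_zero, mu, mul_comm, ← det_mul, Matrix.mul_add, Matrix.mul_smul, Matrix.mul_one,
    ← Matrix.mul_assoc, mul_nonsing_inv _ ((isUnit_iff_isUnit_det _).mp hU), Matrix.one_mul, etaBar]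
  congr 1
  module

/-- The identity `μ_G(x,a,c) = μ_{G'}(x,a,c)` with the denominators `det((a+c)I + D)` cleared
(see `mu_mul_etaBar`). -/
def ClearedMuEq (A A' : Matrix (Fin n) (Fin n) ℂ) (c : ℂ) : Prop :=
  ∀ a x : ℂ, etaBar A (x * (a + c) + a) x 1 * etaBar A' (a + c) 1 0 =
    etaBar A' (x * (a + c) + a) x 1 * etaBar A (a + c) 1 0

lemma isPolyFun_etaBar_line (A : Matrix (Fin n) (Fin n) ℂ) (x c : ℂ) :
    IsPolyFun fun a => etaBar A (x * (a + c) + a) x 1 :=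
  isPolyFun_etaBar A (((IsPolyFun.const x).mul (IsPolyFun.id.add (.const c))).add .id) (.const x)
    (.const 1)

lemma clearedMuEq_of_frequently {A A' : Matrix (Fin n) (Fin n) ℂ} {c : ℂ}
    (h : ∃ᶠ a in cofinite, IsUnit ((a + c) • (1 : Matrix (Fin n) (Fin n) ℂ) + degC A) ∧
      IsUnit ((a + c) • (1 : Matrix (Fin n) (Fin n) ℂ) + degC A') ∧
      ∀ x, mu A x a c = mu A' x a c) :
    ClearedMuEq A A' c := by
  intro a x
  have hden (B : Matrix (Fin n) (Fin n) ℂ) : IsPolyFun fun a => etaBar B (a + c) 1 0 :=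
    isPolyFun_etaBar B (IsPolyFun.id.add (.const c)) (.const 1) (.const 0)
  refine congrFun (IsPolyFun.eq_of_frequently_eq ((isPolyFun_etaBar_line A x c).mul (hden A'))
    ((isPolyFun_etaBar_line A' x c).mul (hden A)) (h.mono ?_)) a
  rintro b ⟨hU, hU', hmu⟩
  rw [← mu_mul_etaBar A x b c hU, ← mu_mul_etaBar A' x b c hU', hmu x]
  ring

lemma etaBar_eq_of_forall_etaBar_one_eq {A A' : Matrix (Fin n) (Fin n) ℂ}
    (h : ∀ y x, etaBar A y x 1 = etaBar A' y x 1) (x t u : ℂ) :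
    etaBar A x t u = etaBar A' x t u := by
  have hscale (B : Matrix (Fin n) (Fin n) ℂ) {u : ℂ} (hu : u ≠ 0) :
      etaBar B x t u = u ^ n * etaBar B (x / u) (t / u) 1 := by
    rw [etaBar, etaBar, show u ^ n = u ^ Fintype.card (Fin n) by rw [Fintype.card_fin], ← det_smul]
    congr 1
    simp only [smul_add, smul_smul, mul_div_cancel₀ _ hu, mul_one]
  have hpoly (B : Matrix (Fin n) (Fin n) ℂ) : IsPolyFun fun u => etaBar B x t u :=
    isPolyFun_etaBar B (.const x) (.const t) .id
  refine congrFun (IsPolyFun.eq_of_frequently_eq (hpoly A) (hpoly A')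
    ((eventually_cofinite_ne 0).mono fun u hu => ?_).frequently) u
  rw [hscale A hu, hscale A' hu, h]

lemma etaBar_one_eq_of_clearedMuEq {A A' : Matrix (Fin n) (Fin n) ℂ} {c : ℂ}
    (hP : ∀ s, etaBar A s 1 0 = etaBar A' s 1 0) (H : ClearedMuEq A A' c) (y x : ℂ) :
    etaBar A y x 1 = etaBar A' y x 1 := by
  have hline (x : ℂ) :
      (fun a => etaBar A (x * (a + c) + a) x 1) = fun a => etaBar A' (x * (a + c) + a) x 1 :=
    IsPolyFun.eq_of_frequently_eq (isPolyFun_etaBar_line A x c) (isPolyFun_etaBar_line A' x c)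
      ((eventually_etaBar_one_zero_ne_zero A c).mono fun a ha => by
        have := H a x
        rw [← hP] at this
        exact mul_right_cancel₀ ha this).frequently
  have hpoly (B : Matrix (Fin n) (Fin n) ℂ) : IsPolyFun fun x => etaBar B y x 1 :=
    isPolyFun_etaBar B (.const y) .id (.const 1)
  refine congrFun (IsPolyFun.eq_of_frequently_eq (hpoly A) (hpoly A')
    ((eventually_cofinite_ne (-1)).mono fun x hx => ?_).frequently) x
  have hx1 : x + 1 ≠ 0 := fun h => hx (eq_neg_of_add_eq_zero_left h)
  have hy : x * ((y - x * c) / (x + 1) + c) + (y - x * c) / (x + 1) = y := by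
    field_simp
    ring
  simpa only [hy] using congrFun (hline x) ((y - x * c) / (x + 1))

/-- The numerator of `x ↦ μ_G(x,a,c)` (see `mu_mul_etaBar`). -/
def muNumerator (A : Matrix (Fin n) (Fin n) ℂ) (a c : ℂ) : ℂ[X] :=
  det ((X : ℂ[X]) • (diagonal fun i => a + c + ∑ j, A i j).map C + (a • 1 + A).map C)

lemma eval_muNumerator (A : Matrix (Fin n) (Fin n) ℂ) (a c x : ℂ) :
    (muNumerator A a c).eval x = etaBar A (x * (a + c) + a) x 1 := by
  rw [muNumerator, eval_det_X_smul_add, etaBar, ← smul_one_add_degC]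
  congr 1
  module

lemma coeff_muNumerator [NeZero n] {A : Matrix (Fin n) (Fin n) ℂ} (hdiag : ∀ i, A i i = 0)
    {a c : ℂ} (hA : etaBar A (a + c) 1 0 ≠ 0) :
    (muNumerator A a c).coeff (n - 1) = a * (derivative (degreePoly A)).eval (a + c) := by
  rw [etaBar_one_zero, smul_one_add_degC, det_diagonal] at hA
  have hcoeff := coeff_det_X_smul_diagonal_add (fun i => prod_ne_zero_iff.mp hA i (mem_univ i))
    (a • 1 + A)
  rw [Fintype.card_fin] at hcoeff
  rw [muNumerator, hcoeff, eval_derivative_degreePoly, mul_sum]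
  simp [hdiag]

lemma degreePoly_eq_of_clearedMuEq {A A' : Matrix (Fin n) (Fin n) ℂ} (hdiag : ∀ i, A i i = 0)
    (hdiag' : ∀ i, A' i i = 0) {c : ℂ} (H : ClearedMuEq A A' c) :
    degreePoly A = degreePoly A' := by
  obtain rfl | hn := Nat.eq_zero_or_pos n
  · simp [degreePoly]
  have : NeZero n := NeZero.of_pos hn
  refine (degreePoly_monic A).eq_of_derivative_mul_eq (degreePoly_monic A')
    (by rw [natDegree_degreePoly, natDegree_degreePoly]) ?_
  have hfreq : ∃ᶠ a in cofinite, (derivative (degreePoly A) * degreePoly A').eval (a + c) =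
      (derivative (degreePoly A') * degreePoly A).eval (a + c) := by
    refine (((eventually_cofinite_ne 0).and (eventually_etaBar_one_zero_ne_zero A c)).and
      (eventually_etaBar_one_zero_ne_zero A' c)).frequently.mono ?_
    rintro a ⟨⟨ha, hA⟩, hA'⟩
    have hnum : muNumerator A a c * C (etaBar A' (a + c) 1 0) =
        muNumerator A' a c * C (etaBar A (a + c) 1 0) :=
      Polynomial.funext fun x => by simpa only [eval_mul, eval_C, eval_muNumerator] using H a x
    -- the zero diagonal makes the `x ^ (n - 1)` coefficients proportional to `P'(a + c)`
    have htop := congrArg (coeff · (n - 1)) hnum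
    simp only [coeff_mul_C, coeff_muNumerator hdiag hA, coeff_muNumerator hdiag' hA'] at htop
    rw [eval_mul, eval_mul, eval_degreePoly, eval_degreePoly]
    exact mul_left_cancel₀ ha (by linear_combination htop)
  refine eq_of_infinite_eval_eq _ _ <| ((frequently_cofinite_iff_infinite.mp hfreq).image
    (add_left_injective c).injOn).mono ?_
  rintro _ ⟨a, ha, rfl⟩
  exact ha

lemma etaBar_eq_of_clearedMuEq {A A' : Matrix (Fin n) (Fin n) ℂ} (hdiag : ∀ i, A i i = 0)
    (hdiag' : ∀ i, A' i i = 0) {c : ℂ} (H : ClearedMuEq A A' c) (x t u : ℂ) :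
    etaBar A x t u = etaBar A' x t u := by
  have hP (s : ℂ) : etaBar A s 1 0 = etaBar A' s 1 0 := by
    rw [← eval_degreePoly, ← eval_degreePoly, degreePoly_eq_of_clearedMuEq hdiag hdiag' H]
  exact etaBar_eq_of_forall_etaBar_one_eq (etaBar_one_eq_of_clearedMuEq hP H) x t u

lemma clearedMuEq_one_of_forall_pos {A A' : Matrix (Fin n) (Fin n) ℂ}
    (h01 : ∀ i j, A i j = 0 ∨ A i j = 1) (h01' : ∀ i j, A' i j = 0 ∨ A' i j = 1)
    (h : ∀ a b : ℝ, 0 < a → 0 < b → ∀ x : ℂ, mu A x (a : ℂ) (b : ℂ) = mu A' x (a : ℂ) (b : ℂ)) :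
    ClearedMuEq A A' 1 := by
  refine clearedMuEq_of_frequently <|
    ((Set.Ioi_infinite (0 : ℝ)).image Complex.ofReal_injective.injOn).frequently_cofinite.mono ?_
  rintro _ ⟨r, hr, rfl⟩
  have hre : 0 < ((r : ℂ) + 1).re := by
    rw [Set.mem_Ioi] at hr
    simp only [Complex.add_re, Complex.ofReal_re, Complex.one_re]
    linarith
  refine ⟨isUnit_smul_one_add_degC_of_re_pos h01 hre, isUnit_smul_one_add_degC_of_re_pos h01' hre,
    fun x => ?_⟩
  simpa using h r 1 hr one_pos x

lemma clearedMuEq_of_forall_isUnit {A A' : Matrix (Fin n) (Fin n) ℂ} {c : ℂ}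
    (H : ∀ a x : ℂ, IsUnit ((a + c) • (1 : Matrix (Fin n) (Fin n) ℂ) + degC A) →
      IsUnit ((a + c) • (1 : Matrix (Fin n) (Fin n) ℂ) + degC A') → mu A x a c = mu A' x a c) :
    ClearedMuEq A A' c := by
  refine clearedMuEq_of_frequently <| ((eventually_etaBar_one_zero_ne_zero A c).and
    (eventually_etaBar_one_zero_ne_zero A' c)).frequently.mono fun a ⟨hA, hA'⟩ => ?_
  rw [← isUnit_smul_one_add_degC_iff] at hA hA'
  exact ⟨hA, hA', fun x => H a x hA hA'⟩

lemma mu_eq_of_etaBar_eq {A A' : Matrix (Fin n) (Fin n) ℂ}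
    (h : ∀ x t u, etaBar A x t u = etaBar A' x t u) {x a b : ℂ}
    (hU : IsUnit ((a + b) • (1 : Matrix (Fin n) (Fin n) ℂ) + degC A)) :
    mu A x a b = mu A' x a b := by
  have hdet := (isUnit_smul_one_add_degC_iff A _).mp hU
  have hU' := (isUnit_smul_one_add_degC_iff A' _).mpr (h (a + b) 1 0 ▸ hdet)
  refine mul_right_cancel₀ hdet ?_
  rw [mu_mul_etaBar A x a b hU, h (a + b) 1 0, mu_mul_etaBar A' x a b hU', h]

end Stmt14

theorem stmt_14_general {n : ℕ} (A A' : Matrix (Fin n) (Fin n) ℂ)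
    (h01 : ∀ i j, A i j = 0 ∨ A i j = 1) (h01' : ∀ i j, A' i j = 0 ∨ A' i j = 1)
    (hdiag : ∀ i, A i i = 0) (hdiag' : ∀ i, A' i i = 0) :
    ((∀ x t u : ℂ, etaBar A x t u = etaBar A' x t u) ↔
      (∀ a b : ℝ, 0 < a → 0 < b → ∀ x : ℂ, mu A x (a : ℂ) (b : ℂ) = mu A' x (a : ℂ) (b : ℂ))) ∧
    ((∀ a b : ℝ, 0 < a → 0 < b → ∀ x : ℂ, mu A x (a : ℂ) (b : ℂ) = mu A' x (a : ℂ) (b : ℂ)) ↔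
      (∃ c : ℂ, ∀ a x : ℂ,
        IsUnit ((a + c) • (1 : Matrix (Fin n) (Fin n) ℂ) + degC A) →
        IsUnit ((a + c) • (1 : Matrix (Fin n) (Fin n) ℂ) + degC A') →
        mu A x a c = mu A' x a c)) := by
  have h12 (h : ∀ x t u : ℂ, etaBar A x t u = etaBar A' x t u) (a b : ℝ) (ha : 0 < a)
      (hb : 0 < b) (x : ℂ) : mu A x a b = mu A' x a b :=
    mu_eq_of_etaBar_eq h (isUnit_smul_one_add_degC_of_re_pos h01 (by simp [ha, hb, add_pos]))
  have h21 := fun h =>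
    etaBar_eq_of_clearedMuEq hdiag hdiag' (clearedMuEq_one_of_forall_pos h01 h01' h)
  exact ⟨⟨h12, h21⟩, fun h => ⟨0, fun a x hU _ => mu_eq_of_etaBar_eq (h21 h) hU⟩,
    fun ⟨_, H⟩ => h12 (etaBar_eq_of_clearedMuEq hdiag hdiag' (clearedMuEq_of_forall_isUnit H))⟩

/-- For simple graphs `G, G'` on `n` vertices the following are
equivalent: (1) equality of the generalized characteristic polynomials; (2) equality of
`μ` for all real `a, b > 0`; (3) equality of `μ(·,·,c)` for some `c ∈ ℂ` wherever both
resolvents exist. -/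
theorem stmt_14 {n : ℕ} (A A' : Matrix (Fin n) (Fin n) ℂ)
    (h01 : ∀ i j, A i j = 0 ∨ A i j = 1) (h01' : ∀ i j, A' i j = 0 ∨ A' i j = 1)
    (hsymm : Aᵀ = A) (hsymm' : A'ᵀ = A')
    (hdiag : ∀ i, A i i = 0) (hdiag' : ∀ i, A' i i = 0) :
    ((∀ x t u : ℂ, etaBar A x t u = etaBar A' x t u) ↔
      (∀ a b : ℝ, 0 < a → 0 < b → ∀ x : ℂ, mu A x (a : ℂ) (b : ℂ) = mu A' x (a : ℂ) (b : ℂ))) ∧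
    ((∀ a b : ℝ, 0 < a → 0 < b → ∀ x : ℂ, mu A x (a : ℂ) (b : ℂ) = mu A' x (a : ℂ) (b : ℂ)) ↔
      (∃ c : ℂ, ∀ a x : ℂ,
        IsUnit ((a + c) • (1 : Matrix (Fin n) (Fin n) ℂ) + degC A) →
        IsUnit ((a + c) • (1 : Matrix (Fin n) (Fin n) ℂ) + degC A') →
        mu A x a c = mu A' x a c)) :=
  stmt_14_general A A' h01 h01' hdiag hdiag'
end
end

section
/- Let G and G' be simple digraphs on n vertices. If η_G = η_{G'} and η_{Gᶜ} = η_{G'ᶜ} as polynomials in (x,t↑,t↓,u↑,u↓), then η^c_G = η^c_{G'} as polynomials in (x,y,t↑,t↓,u↑,u↓). -/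
open Matrix

noncomputable section

namespace Stmt16

/-- The generalized characteristic polynomial
`η_G(x,t↑,t↓,u↑,u↓) = det(x·I + t↑·D^out + t↓·D^in + u↑·A + u↓·Aᵀ)`. -/
def eta {n : ℕ} (A : Matrix (Fin n) (Fin n) ℂ) (x t₁ t₂ u₁ u₂ : ℂ) : ℂ :=
  (x • (1 : Matrix (Fin n) (Fin n) ℂ)
    + t₁ • (Matrix.diagonal fun i => ∑ j, A i j)
    + t₂ • (Matrix.diagonal fun i => ∑ j, A j i)
    + u₁ • A + u₂ • Aᵀ).det

/-- The completely generalized characteristic polynomial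
`η^c_G(x,y,t↑,t↓,u↑,u↓) = det(x·I + y·J + t↑·D^out + t↓·D^in + u↑·A + u↓·Aᵀ)`. -/
def etaC {n : ℕ} (A : Matrix (Fin n) (Fin n) ℂ) (x y t₁ t₂ u₁ u₂ : ℂ) : ℂ :=
  (x • (1 : Matrix (Fin n) (Fin n) ℂ)
    + y • (Matrix.of fun _ _ => (1 : ℂ))
    + t₁ • (Matrix.diagonal fun i => ∑ j, A i j)
    + t₂ • (Matrix.diagonal fun i => ∑ j, A j i)
    + u₁ • A + u₂ • Aᵀ).det

/-- The adjacency matrix of the complement digraph: `J − I − A`. -/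
def complAdj {n : ℕ} (A : Matrix (Fin n) (Fin n) ℂ) : Matrix (Fin n) (Fin n) ℂ :=
  (Matrix.of fun _ _ => (1 : ℂ)) - 1 - A

end Stmt16

/-! Since the all-ones matrix `J` has rank one, `det (M + y • J)` is affine in `y`, so `η^c_G` is
determined by its values at two distinct `y`. At `y = 0` it is `η_G`. The complement has adjacency
matrix `J - I - A` and degrees `n - 1 - d`, so the pencil of `Gᶜ` is the pencil of `G` at
reparametrised arguments plus `(u↑ + u↓) • J`; thus `η_{Gᶜ}` gives `η^c_G` on `y = -(u↑ + u↓)`.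
This settles `u↑ + u↓ ≠ 0`, and continuity in `u↑` the remaining hyperplane. -/

namespace Matrix

variable {n R : Type*} [Fintype n] [DecidableEq n] [CommRing R]

/-- By the Schur complement, `M + y • J` is the complement of the corner `1` in a bordered matrix
in which `y` occurs only in the border row. -/
theorem det_add_smul_allOnes (M : Matrix n n R) (y : R) :
    (M + y • of fun _ _ => (1 : R)).det =
      M.det + y * (fromBlocks (0 : Matrix Unit Unit R) (-replicateRow Unit 1)
        (replicateCol Unit 1) M).det := by
  set N := fromBlocks (0 : Matrix Unit Unit R) (-replicateRow Unit 1) (replicateCol Unit 1) M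
  have hschur : (M + y • of fun _ _ => (1 : R)).det =
      (fromBlocks 1 (-(y • replicateRow Unit 1)) (replicateCol Unit 1) M).det := by
    rw [det_fromBlocks_one₁₁]
    congr 1
    ext i j
    simp [mul_apply]
  have hborder : fromBlocks 1 (-(y • replicateRow Unit 1)) (replicateCol Unit 1) M =
      N.updateRow (Sum.inl ()) (Pi.single (Sum.inl ()) 1 + y • N (Sum.inl ())) := by
    ext (i | i) (j | j) <;> simp [N, updateRow_apply]
  have hcorner : N.updateRow (Sum.inl ()) (Pi.single (Sum.inl ()) 1) =
      fromBlocks 1 0 (replicateCol Unit 1) M := by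
    ext (i | i) (j | j) <;> simp [N, updateRow_apply]
  rw [hschur, hborder, det_updateRow_add, det_updateRow_smul, updateRow_eq_self, hcorner,
    det_fromBlocks_zero₁₂, det_one, one_mul]

theorem det_add_smul_allOnes_eq_of_eq [IsDomain R] {M M' : Matrix n n R} {y₀ : R} (hy₀ : y₀ ≠ 0)
    (h : M.det = M'.det)
    (h₀ : (M + y₀ • of fun _ _ => (1 : R)).det = (M' + y₀ • of fun _ _ => (1 : R)).det)
    (y : R) : (M + y • of fun _ _ => (1 : R)).det = (M' + y • of fun _ _ => (1 : R)).det := by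
  rw [det_add_smul_allOnes, det_add_smul_allOnes, h, add_right_inj] at h₀ ⊢
  rw [mul_left_cancel₀ hy₀ h₀]

end Matrix

namespace Stmt16

variable {n : ℕ}

def pencil (A : Matrix (Fin n) (Fin n) ℂ) (x t₁ t₂ u₁ u₂ : ℂ) : Matrix (Fin n) (Fin n) ℂ :=
  x • 1 + t₁ • diagonal (fun i => ∑ j, A i j) + t₂ • diagonal (fun i => ∑ j, A j i)
    + u₁ • A + u₂ • Aᵀ

theorem etaC_eq_det_pencil_add (A : Matrix (Fin n) (Fin n) ℂ) (x y t₁ t₂ u₁ u₂ : ℂ) :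
    etaC A x y t₁ t₂ u₁ u₂ = (pencil A x t₁ t₂ u₁ u₂ + y • of fun _ _ => (1 : ℂ)).det := by
  unfold etaC pencil
  congr 1
  abel

theorem diagonal_rowSum_complAdj (A : Matrix (Fin n) (Fin n) ℂ) :
    diagonal (fun i => ∑ j, complAdj A i j) =
      ((n : ℂ) - 1) • 1 - diagonal fun i => ∑ j, A i j := by
  ext i j
  rcases eq_or_ne i j with rfl | hij
  · simp [complAdj, Finset.sum_sub_distrib, one_apply]
  · simp [hij]

theorem diagonal_colSum_complAdj (A : Matrix (Fin n) (Fin n) ℂ) :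
    diagonal (fun i => ∑ j, complAdj A j i) =
      ((n : ℂ) - 1) • 1 - diagonal fun i => ∑ j, A j i := by
  ext i j
  rcases eq_or_ne i j with rfl | hij
  · simp [complAdj, Finset.sum_sub_distrib, one_apply, eq_comm]
  · simp [hij]

theorem etaC_neg_eq_eta_complAdj (A : Matrix (Fin n) (Fin n) ℂ) (x t₁ t₂ u₁ u₂ : ℂ) :
    etaC A x (-(u₁ + u₂)) t₁ t₂ u₁ u₂ =
      eta (complAdj A) (x + ((n : ℂ) - 1) * (t₁ + t₂) - u₁ - u₂) (-t₁) (-t₂) (-u₁) (-u₂) := by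
  unfold etaC eta
  rw [diagonal_rowSum_complAdj, diagonal_colSum_complAdj]
  congr 1
  have hJ : (of fun _ _ => (1 : ℂ) : Matrix (Fin n) (Fin n) ℂ)ᵀ = of fun _ _ => 1 := rfl
  simp only [complAdj, transpose_sub, transpose_one, hJ]
  module

theorem continuous_etaC_u₁ (A : Matrix (Fin n) (Fin n) ℂ) (x y t₁ t₂ u₂ : ℂ) :
    Continuous fun u₁ => etaC A x y t₁ t₂ u₁ u₂ := by
  unfold etaC
  fun_prop

end Stmt16

open Stmt16

theorem stmt_16_general {n : ℕ} (A A' : Matrix (Fin n) (Fin n) ℂ)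
    (heta : ∀ x t₁ t₂ u₁ u₂ : ℂ, eta A x t₁ t₂ u₁ u₂ = eta A' x t₁ t₂ u₁ u₂)
    (hetac : ∀ x t₁ t₂ u₁ u₂ : ℂ,
      eta (complAdj A) x t₁ t₂ u₁ u₂ = eta (complAdj A') x t₁ t₂ u₁ u₂) :
    ∀ x y t₁ t₂ u₁ u₂ : ℂ, etaC A x y t₁ t₂ u₁ u₂ = etaC A' x y t₁ t₂ u₁ u₂ := by
  have hgeneric : ∀ x y t₁ t₂ u₁ u₂ : ℂ, u₁ + u₂ ≠ 0 →
      etaC A x y t₁ t₂ u₁ u₂ = etaC A' x y t₁ t₂ u₁ u₂ := by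
    intro x y t₁ t₂ u₁ u₂ hu
    have hcompl := hetac (x + ((n : ℂ) - 1) * (t₁ + t₂) - u₁ - u₂) (-t₁) (-t₂) (-u₁) (-u₂)
    rw [← etaC_neg_eq_eta_complAdj, ← etaC_neg_eq_eta_complAdj, etaC_eq_det_pencil_add,
      etaC_eq_det_pencil_add] at hcompl
    rw [etaC_eq_det_pencil_add, etaC_eq_det_pencil_add]
    exact det_add_smul_allOnes_eq_of_eq (neg_ne_zero.2 hu) (heta x t₁ t₂ u₁ u₂) hcompl y
  intro x y t₁ t₂ u₁ u₂
  refine congrFun ((continuous_etaC_u₁ A x y t₁ t₂ u₂).ext_on (dense_compl_singleton (-u₂))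
    (continuous_etaC_u₁ A' x y t₁ t₂ u₂) fun s hs => ?_) u₁
  exact hgeneric x y t₁ t₂ s u₂ fun h => hs (eq_neg_of_add_eq_zero_left h)

/-- Zeta-equivalent simple digraphs with zeta-equivalent complements
have the same completely generalized characteristic polynomial. -/
theorem stmt_16 {n : ℕ} (A A' : Matrix (Fin n) (Fin n) ℂ)
    (h01 : ∀ i j, A i j = 0 ∨ A i j = 1) (h01' : ∀ i j, A' i j = 0 ∨ A' i j = 1)
    (hdiag : ∀ i, A i i = 0) (hdiag' : ∀ i, A' i i = 0)
    (heta : ∀ x t₁ t₂ u₁ u₂ : ℂ, eta A x t₁ t₂ u₁ u₂ = eta A' x t₁ t₂ u₁ u₂)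
    (hetac : ∀ x t₁ t₂ u₁ u₂ : ℂ,
      eta (complAdj A) x t₁ t₂ u₁ u₂ = eta (complAdj A') x t₁ t₂ u₁ u₂) :
    ∀ x y t₁ t₂ u₁ u₂ : ℂ, etaC A x y t₁ t₂ u₁ u₂ = etaC A' x y t₁ t₂ u₁ u₂ :=
  stmt_16_general A A' heta hetac
end
end

section
/- Let Q and R be n×n real matrices with Q² = I_n, Rᵀ = −R, and Q·R = −R. Then Q + t·R is invertible for every t ∈ ℝ. -/
open Matrix

/-- If `Q² = I`, `Rᵀ = −R` and `Q·R = −R` for real matrices, then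
`Q + t·R` is invertible for every real `t`. -/
theorem stmt_17 {n : ℕ} (Q R : Matrix (Fin n) (Fin n) ℝ)
    (hQ : Q * Q = 1) (hR : Rᵀ = -R) (hQR : Q * R = -R) :
    ∀ t : ℝ, IsUnit (Q + t • R) := by
  intro t
  set S : Matrix (Fin n) (Fin n) ℝ := t • R with hS
  have hSt : Sᵀ = -S := by rw [hS, transpose_smul, hR, smul_neg]
  have h1 : Q * (Q + S) = 1 - S := by
    rw [mul_add, hQ, hS, Matrix.mul_smul, hQR, smul_neg, sub_eq_add_neg]
  have h2 : (1 - S) * (1 - S)ᵀ = 1 + S * Sᵀ := by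
    rw [transpose_sub, transpose_one, hSt, sub_neg_eq_add]
    noncomm_ring
  have hpd : ((1 : Matrix (Fin n) (Fin n) ℝ) + S * Sᵀ).PosDef :=
    Matrix.PosDef.add_posSemidef Matrix.PosDef.one
      (by simpa using Matrix.posSemidef_self_mul_conjTranspose S)
  have hdet : IsUnit ((1 - S) * (1 - S)ᵀ).det := by
    rw [h2]; exact hpd.det_pos.ne'.isUnit
  rw [det_mul] at hdet
  have hunit : IsUnit (1 - S).det := isUnit_of_mul_isUnit_left hdet
  have : IsUnit (Q.det * (Q + S).det) := by rw [← det_mul, h1]; exact hunit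
  exact (isUnit_iff_isUnit_det _).2 (isUnit_of_mul_isUnit_right this)
end

section
/- Let G and G' be simple digraphs on n vertices, and suppose there exist real n×n matrices Q and R such that: Q² = I_n; Q·J_n = J_n = J_n·Q; R·J_n = 0 = J_n·R; Q + t·R is invertible for every t ∈ ℝ; Q·A_G·Q = A_{G'} and Q·A_Gᵀ·Q = A_{G'}ᵀ; R·D^out_G = D^out_{G'}·R and R·D^in_G = D^in_{G'}·R; and R·A_G − A_{G'}·R = R·A_Gᵀ − A_{G'}ᵀ·R = −(Q·D^out_G − D^out_{G'}·Q) = −(Q·D^in_G − D^in_{G'}·Q). Then η^c_G = η^c_{G'}, i.e., for all complex x, y, t↑, t↓, u↑, u↓, det(x·I_n + y·J_n + t↑·D^out_G + t↓·D^in_G + u↑·A_G + u↓·A_Gᵀ) = det(x·I_n + y·J_n + t↑·D^out_{G'} + t↓·D^in_{G'} + u↑·A_{G'} + u↓·A_{G'}ᵀ). -/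
open Matrix

noncomputable section

namespace Stmt18

/-- The out-degree matrix: diagonal matrix of row sums. -/
def dout {n : ℕ} (A : Matrix (Fin n) (Fin n) ℝ) : Matrix (Fin n) (Fin n) ℝ :=
  Matrix.diagonal fun i => ∑ j, A i j

/-- The in-degree matrix: diagonal matrix of column sums. -/
def din {n : ℕ} (A : Matrix (Fin n) (Fin n) ℝ) : Matrix (Fin n) (Fin n) ℝ :=
  Matrix.diagonal fun i => ∑ j, A j i

/-- The all-ones matrix. -/
def allOnes (n : ℕ) : Matrix (Fin n) (Fin n) ℝ := Matrix.of fun _ _ => 1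

/-- The completely generalized characteristic polynomial
`η^c_G(x,y,t↑,t↓,u↑,u↓) = det(x·I + y·J + t↑·D^out + t↓·D^in + u↑·A + u↓·Aᵀ)`
of the simple digraph with adjacency matrix `A`, evaluated over `ℂ`. -/
def etaC {n : ℕ} (A : Matrix (Fin n) (Fin n) ℝ) (x y t₁ t₂ u₁ u₂ : ℂ) : ℂ :=
  (x • (1 : Matrix (Fin n) (Fin n) ℂ)
    + y • (allOnes n).map (Complex.ofReal)
    + t₁ • (dout A).map (Complex.ofReal)
    + t₂ • (din A).map (Complex.ofReal)
    + u₁ • A.map (Complex.ofReal)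
    + u₂ • (A.map (Complex.ofReal))ᵀ).det

end Stmt18

open Stmt18

lemma det_affine_eval {n : ℕ} (B D : Matrix (Fin n) (Fin n) ℂ) (z : ℂ) :
    (B + z • D).det = Polynomial.eval z
      (B.map Polynomial.C + (Polynomial.X : Polynomial ℂ) • D.map Polynomial.C).det := by
  have h := RingHom.map_det (Polynomial.evalRingHom z)
    (B.map Polynomial.C + (Polynomial.X : Polynomial ℂ) • D.map Polynomial.C)
  rw [Polynomial.coe_evalRingHom] at h
  rw [h]
  congr 1
  ext i j
  simp [Matrix.map_apply, Matrix.add_apply, Matrix.smul_apply, smul_eq_mul]; ring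

lemma det_affine_congr {n : ℕ} (B D B' D' : Matrix (Fin n) (Fin n) ℂ)
    (h : {z : ℂ | (B + z • D).det = (B' + z • D').det}.Infinite) :
    ∀ z : ℂ, (B + z • D).det = (B' + z • D').det := by
  intro z
  rw [det_affine_eval, det_affine_eval]
  congr 1
  apply Polynomial.eq_of_infinite_eval_eq
  apply h.mono
  intro w hw
  simpa [← det_affine_eval] using hw

lemma keyB_aux {n : ℕ} (B D B' D' : Matrix (Fin n) (Fin n) ℂ) (g : ℝ → ℂ)
    (hg : Function.Injective g)
    (h : ∀ t : ℝ, (B + g t • D).det = (B' + g t • D').det) :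
    ∀ z : ℂ, (B + z • D).det = (B' + z • D').det := by
  apply det_affine_congr
  exact Set.infinite_of_injective_forall_mem hg h

lemma keyA {n : ℕ} (Ac A'c Qc Rc Jc D1c D1'c D2c D2'c Ec : Matrix (Fin n) (Fin n) ℂ) (s : ℂ)
    (hQJ : Qc * Jc = Jc) (hJQ : Jc * Qc = Jc)
    (hRJ : Rc * Jc = 0) (hJR : Jc * Rc = 0)
    (f1 : Qc * Ac = A'c * Qc) (f2 : Qc * Acᵀ = A'cᵀ * Qc)
    (f3 : Rc * D1c = D1'c * Rc) (f4 : Rc * D2c = D2'c * Rc)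
    (f5 : Rc * Ac = A'c * Rc + Ec) (f6 : Rc * Acᵀ = A'cᵀ * Rc + Ec)
    (f7 : Qc * D1c = D1'c * Qc - Ec) (f8 : Qc * D2c = D2'c * Qc - Ec)
    (hdet : (Qc + s • Rc).det ≠ 0)
    (x y t₁ t₂ u₁ u₂ : ℂ) (ht : t₁ + t₂ = s * (u₁ + u₂)) :
    (x • 1 + y • Jc + t₁ • D1c + t₂ • D2c + u₁ • Ac + u₂ • Acᵀ).det
      = (x • 1 + y • Jc + t₁ • D1'c + t₂ • D2'c + u₁ • A'c + u₂ • A'cᵀ).det := by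
  obtain rfl : t₂ = s * (u₁ + u₂) - t₁ := by linear_combination ht
  have hcomm : (Qc + s • Rc) *
        (x • 1 + y • Jc + t₁ • D1c + (s * (u₁ + u₂) - t₁) • D2c + u₁ • Ac + u₂ • Acᵀ)
      = (x • 1 + y • Jc + t₁ • D1'c + (s * (u₁ + u₂) - t₁) • D2'c + u₁ • A'c + u₂ • A'cᵀ)
        * (Qc + s • Rc) := by
    simp only [add_mul, mul_add, Matrix.smul_mul, Matrix.mul_smul, mul_one, one_mul,
      f1, f2, f3, f4, f5, f6, f7, f8, hQJ, hJQ, hRJ, hJR, smul_zero, smul_add, smul_sub, smul_smul]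
    match_scalars <;> ring
  have h := congrArg Matrix.det hcomm
  rw [Matrix.det_mul, Matrix.det_mul] at h
  exact mul_left_cancel₀ hdet (h.trans (mul_comm _ _))

/-- The conjugation step of the digraph-switching theorem: the stated
commutation relations for `Q` and `R` imply equality of the completely generalized
characteristic polynomials. -/
theorem stmt_18 {n : ℕ} (A A' Q R : Matrix (Fin n) (Fin n) ℝ)
    (h01 : ∀ i j, A i j = 0 ∨ A i j = 1) (h01' : ∀ i j, A' i j = 0 ∨ A' i j = 1)
    (hdiag : ∀ i, A i i = 0) (hdiag' : ∀ i, A' i i = 0)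
    (hQ : Q * Q = 1)
    (hQJ : Q * allOnes n = allOnes n) (hJQ : allOnes n * Q = allOnes n)
    (hRJ : R * allOnes n = 0) (hJR : allOnes n * R = 0)
    (hinv : ∀ t : ℝ, IsUnit (Q + t • R))
    (hQA : Q * A * Q = A') (hQAT : Q * Aᵀ * Q = A'ᵀ)
    (hRdout : R * dout A = dout A' * R) (hRdin : R * din A = din A' * R)
    (hRA₁ : R * A - A' * R = R * Aᵀ - A'ᵀ * R)
    (hRA₂ : R * A - A' * R = -(Q * dout A - dout A' * Q))
    (hRA₃ : R * A - A' * R = -(Q * din A - din A' * Q)) :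
    ∀ x y t₁ t₂ u₁ u₂ : ℂ, etaC A x y t₁ t₂ u₁ u₂ = etaC A' x y t₁ t₂ u₁ u₂ := by
  clear h01 h01' hdiag hdiag'
  -- complexification helpers
  have mm : ∀ M N : Matrix (Fin n) (Fin n) ℝ,
      (M * N).map Complex.ofReal = M.map Complex.ofReal * N.map Complex.ofReal := by
    intro M N; ext i j; simp [Matrix.mul_apply, Matrix.map_apply]
  have ms : ∀ M N : Matrix (Fin n) (Fin n) ℝ,
      (M - N).map Complex.ofReal = M.map Complex.ofReal - N.map Complex.ofReal := by
    intro M N; ext i j; simp [Matrix.map_apply, Matrix.sub_apply]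
  have ma : ∀ M N : Matrix (Fin n) (Fin n) ℝ,
      (M + N).map Complex.ofReal = M.map Complex.ofReal + N.map Complex.ofReal := by
    intro M N; ext i j; simp [Matrix.map_apply, Matrix.add_apply]
  have m1 : (1 : Matrix (Fin n) (Fin n) ℝ).map Complex.ofReal = 1 := by
    ext i j; simp [Matrix.map_apply, Matrix.one_apply, apply_ite]
  have m0 : (0 : Matrix (Fin n) (Fin n) ℝ).map Complex.ofReal = 0 := by
    ext i j; simp [Matrix.map_apply]
  have mt : ∀ M : Matrix (Fin n) (Fin n) ℝ,
      (Mᵀ).map Complex.ofReal = (M.map Complex.ofReal)ᵀ := fun _ => rfl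
  -- real-level identities
  have e1 : Q * A = A' * Q := by rw [← hQA, mul_assoc, hQ, mul_one]
  have e2 : Q * Aᵀ = A'ᵀ * Q := by rw [← hQAT, mul_assoc, hQ, mul_one]
  have e3 : R * Aᵀ = A'ᵀ * R + (R * A - A' * R) := by rw [hRA₁]; abel
  have e4 : Q * dout A = dout A' * Q - (R * A - A' * R) := by rw [hRA₂]; abel
  have e5 : Q * din A = din A' * Q - (R * A - A' * R) := by rw [hRA₃]; abel
  -- complexified identities
  have fQJ : Q.map Complex.ofReal * (allOnes n).map Complex.ofReal = (allOnes n).map Complex.ofReal := by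
    rw [← mm, hQJ]
  have fJQ : (allOnes n).map Complex.ofReal * Q.map Complex.ofReal = (allOnes n).map Complex.ofReal := by
    rw [← mm, hJQ]
  have fRJ : R.map Complex.ofReal * (allOnes n).map Complex.ofReal = 0 := by
    rw [← mm, hRJ, m0]
  have fJR : (allOnes n).map Complex.ofReal * R.map Complex.ofReal = 0 := by
    rw [← mm, hJR, m0]
  have f1 : Q.map Complex.ofReal * A.map Complex.ofReal
      = A'.map Complex.ofReal * Q.map Complex.ofReal := by rw [← mm, ← mm, e1]
  have f2 : Q.map Complex.ofReal * (A.map Complex.ofReal)ᵀ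
      = (A'.map Complex.ofReal)ᵀ * Q.map Complex.ofReal := by rw [← mt, ← mt, ← mm, ← mm, e2]
  have f3 : R.map Complex.ofReal * (dout A).map Complex.ofReal
      = (dout A').map Complex.ofReal * R.map Complex.ofReal := by rw [← mm, ← mm, hRdout]
  have f4 : R.map Complex.ofReal * (din A).map Complex.ofReal
      = (din A').map Complex.ofReal * R.map Complex.ofReal := by rw [← mm, ← mm, hRdin]
  have f5 : R.map Complex.ofReal * A.map Complex.ofReal
      = A'.map Complex.ofReal * R.map Complex.ofReal
        + (R.map Complex.ofReal * A.map Complex.ofReal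
            - A'.map Complex.ofReal * R.map Complex.ofReal) := by abel
  have f6 : R.map Complex.ofReal * (A.map Complex.ofReal)ᵀ
      = (A'.map Complex.ofReal)ᵀ * R.map Complex.ofReal
        + (R.map Complex.ofReal * A.map Complex.ofReal
            - A'.map Complex.ofReal * R.map Complex.ofReal) := by
    have h := congrArg (fun M => M.map Complex.ofReal) e3
    simp only [mm, ms, ma, mt] at h
    exact h
  have f7 : Q.map Complex.ofReal * (dout A).map Complex.ofReal
      = (dout A').map Complex.ofReal * Q.map Complex.ofReal
        - (R.map Complex.ofReal * A.map Complex.ofReal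
            - A'.map Complex.ofReal * R.map Complex.ofReal) := by
    have h := congrArg (fun M => M.map Complex.ofReal) e4
    simp only [mm, ms, ma, mt] at h
    exact h
  have f8 : Q.map Complex.ofReal * (din A).map Complex.ofReal
      = (din A').map Complex.ofReal * Q.map Complex.ofReal
        - (R.map Complex.ofReal * A.map Complex.ofReal
            - A'.map Complex.ofReal * R.map Complex.ofReal) := by
    have h := congrArg (fun M => M.map Complex.ofReal) e5
    simp only [mm, ms, ma, mt] at h
    exact h
  -- nonvanishing determinant for real parameters
  have hdet : ∀ t : ℝ,
      (Q.map Complex.ofReal + (t : ℂ) • R.map Complex.ofReal).det ≠ 0 := by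
    intro t
    have h1 : (Q + t • R).map Complex.ofReal
        = Q.map Complex.ofReal + (t : ℂ) • R.map Complex.ofReal := by
      ext i j; simp [Matrix.map_apply, Matrix.add_apply, Matrix.smul_apply]
    have h4 : IsUnit ((Q + t • R).map Complex.ofReal) := by
      have h := (hinv t).map Complex.ofRealHom.mapMatrix
      rw [RingHom.mapMatrix_apply] at h
      exact h
    rw [← h1]
    exact ((Matrix.isUnit_iff_isUnit_det _).mp h4).ne_zero
  -- Step A specialized to etaC
  have keyAi : ∀ (t : ℝ) (x y t₁ t₂ u₁ u₂ : ℂ), t₁ + t₂ = (t : ℂ) * (u₁ + u₂) →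
      etaC A x y t₁ t₂ u₁ u₂ = etaC A' x y t₁ t₂ u₁ u₂ := by
    intro t x y t₁ t₂ u₁ u₂ ht
    simpa only [etaC] using keyA (A.map Complex.ofReal) (A'.map Complex.ofReal)
      (Q.map Complex.ofReal) (R.map Complex.ofReal) ((allOnes n).map Complex.ofReal)
      ((dout A).map Complex.ofReal) ((dout A').map Complex.ofReal)
      ((din A).map Complex.ofReal) ((din A').map Complex.ofReal) _ (t : ℂ)
      fQJ fJQ fRJ fJR f1 f2 f3 f4 f5 f6 f7 f8 (hdet t) x y t₁ t₂ u₁ u₂ ht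
  -- Step B: polynomial argument in t₁, valid when u₁ + u₂ ≠ 0
  have keyB : ∀ x y t₁ t₂ u₁ u₂ : ℂ, u₁ + u₂ ≠ 0 →
      etaC A x y t₁ t₂ u₁ u₂ = etaC A' x y t₁ t₂ u₁ u₂ := by
    intro x y t₁ t₂ u₁ u₂ hu
    have formA : ∀ (B : Matrix (Fin n) (Fin n) ℝ) (z : ℂ), etaC B x y z t₂ u₁ u₂ =
        ((x • 1 + y • (allOnes n).map Complex.ofReal + t₂ • (din B).map Complex.ofReal
          + u₁ • B.map Complex.ofReal + u₂ • (B.map Complex.ofReal)ᵀ)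
          + z • (dout B).map Complex.ofReal).det := by
      intro B z
      simp only [etaC]
      congr 1
      module
    have hg : Function.Injective (fun t : ℝ => (t : ℂ) * (u₁ + u₂) - t₂) := by
      intro a b hab
      simp only at hab
      have : (a : ℂ) = (b : ℂ) := by
        have h' : (a : ℂ) * (u₁ + u₂) = (b : ℂ) * (u₁ + u₂) := by linear_combination hab
        exact mul_right_cancel₀ hu h'
      exact_mod_cast this
    have agree := keyB_aux
      (x • 1 + y • (allOnes n).map Complex.ofReal + t₂ • (din A).map Complex.ofReal
        + u₁ • A.map Complex.ofReal + u₂ • (A.map Complex.ofReal)ᵀ)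
      ((dout A).map Complex.ofReal)
      (x • 1 + y • (allOnes n).map Complex.ofReal + t₂ • (din A').map Complex.ofReal
        + u₁ • A'.map Complex.ofReal + u₂ • (A'.map Complex.ofReal)ᵀ)
      ((dout A').map Complex.ofReal)
      (fun t : ℝ => (t : ℂ) * (u₁ + u₂) - t₂) hg
      (fun t => by
        rw [← formA A, ← formA A']
        exact keyAi t x y _ t₂ u₁ u₂ (by ring)) t₁
    rw [formA A t₁, formA A' t₁]
    exact agree
  -- Step C: polynomial argument in u₁
  intro x y t₁ t₂ u₁ u₂
  have formA : ∀ (B : Matrix (Fin n) (Fin n) ℝ) (z : ℂ), etaC B x y t₁ t₂ z u₂ =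
      ((x • 1 + y • (allOnes n).map Complex.ofReal + t₁ • (dout B).map Complex.ofReal
        + t₂ • (din B).map Complex.ofReal + u₂ • (B.map Complex.ofReal)ᵀ)
        + z • B.map Complex.ofReal).det := by
    intro B z
    simp only [etaC]
    congr 1
    module
  have inf : {z : ℂ |
      ((x • 1 + y • (allOnes n).map Complex.ofReal + t₁ • (dout A).map Complex.ofReal
        + t₂ • (din A).map Complex.ofReal + u₂ • (A.map Complex.ofReal)ᵀ)
        + z • A.map Complex.ofReal).det =
      ((x • 1 + y • (allOnes n).map Complex.ofReal + t₁ • (dout A').map Complex.ofReal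
        + t₂ • (din A').map Complex.ofReal + u₂ • (A'.map Complex.ofReal)ᵀ)
        + z • A'.map Complex.ofReal).det}.Infinite := by
    apply ((Set.finite_singleton (-u₂)).infinite_compl).mono
    intro z hz
    have hz' : z + u₂ ≠ 0 := by
      intro h0
      exact hz (by simp [eq_neg_of_add_eq_zero_left h0])
    show _ = _
    rw [← formA A z, ← formA A' z]
    exact keyB x y t₁ t₂ z u₂ hz'
  have := det_affine_congr _ _ _ _ inf u₁
  rw [formA A u₁, formA A' u₁]
  exact this
end
end
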